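/- arXiv:2310.19783 — 10 statements merged into one kernel-verified Lean document; each statement's English description precedes it below -/
import Mathlib

section
/- Let X₁,…,Xₙ be subspaces of H with orthogonal projections P₁,…,Pₙ, and set T = Pₙ ∘ ⋯ ∘ P₂ ∘ P₁. Then the following three sets all equal the intersection ⋂ᵢ₌₁ⁿ Xᵢ: (i) the fixed-point set {v ∈ H : T v = v}; (ii) the fixed-point set of the adjoint, {v ∈ H : T† v = v}; (iii) the set of vectors whose norm T preserves, {v ∈ H : ‖T v‖ = ‖v‖}. -/
/-- The orthogonal projection onto a subspace `K` of the finite-dimensional complex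
inner product space `H`, viewed as an operator `H →L[ℂ] H`. -/
noncomputable def proj {H : Type*} [NormedAddCommGroup H] [InnerProductSpace ℂ H]
    [FiniteDimensional ℂ H] (K : Submodule ℂ H) : H →L[ℂ] H :=
  K.subtypeL ∘L K.orthogonalProjection

section Aux

variable {H : Type*} [NormedAddCommGroup H] [InnerProductSpace ℂ H] [FiniteDimensional ℂ H]

lemma proj_apply_norm_le (K : Submodule ℂ H) (v : H) : ‖proj K v‖ ≤ ‖v‖ := by
  have h1 := K.orthogonalProjection.le_opNorm v
  have h2 := Submodule.orthogonalProjectionOnto_norm_le K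
  calc ‖proj K v‖ = ‖K.orthogonalProjection v‖ := rfl
    _ ≤ ‖v‖ := by nlinarith [norm_nonneg v]

lemma mem_of_proj_norm_eq {K : Submodule ℂ H} {v : H} (h : ‖proj K v‖ = ‖v‖) : v ∈ K := by
  have hp := Submodule.norm_sq_eq_add_norm_sq_projection v K
  have h' : ‖K.orthogonalProjection v‖ = ‖v‖ := h
  have h'' : ‖K.orthogonalProjection v‖ ^ 2 = ‖v‖ ^ 2 := by rw [h']
  have h0 : ‖Kᗮ.orthogonalProjection v‖ = 0 := by
    have hsq : ‖Kᗮ.orthogonalProjection v‖ ^ 2 = 0 := by linarith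
    exact pow_eq_zero_iff two_ne_zero |>.mp hsq
  have h0' : (Kᗮ.orthogonalProjection v : H) = 0 := by
    have := norm_eq_zero.mp h0
    exact_mod_cast congrArg Subtype.val this
  have hadd : (K.orthogonalProjection v : H) + (Kᗮ.orthogonalProjection v : H) = v :=
    K.starProjection_add_starProjection_orthogonal v
  rw [h0', add_zero] at hadd
  rw [← hadd]; exact (K.orthogonalProjection v).2

lemma proj_of_mem {K : Submodule ℂ H} {v : H} (h : v ∈ K) : proj K v = v :=
  (Submodule.starProjection_eq_self_iff (K := K)).mpr h

noncomputable def Sl (l : List (Submodule ℂ H)) : H →L[ℂ] H := (l.map proj).reverse.prod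

lemma Sl_cons (K : Submodule ℂ H) (l : List (Submodule ℂ H)) (v : H) :
    Sl (K :: l) v = Sl l (proj K v) := by
  simp [Sl, List.prod_append, ContinuousLinearMap.mul_apply]

lemma Sl_norm_le (l : List (Submodule ℂ H)) (v : H) : ‖Sl l v‖ ≤ ‖v‖ := by
  induction l generalizing v with
  | nil => simp [Sl]
  | cons K t ih =>
      rw [Sl_cons]
      exact (ih _).trans (proj_apply_norm_le K v)

lemma Sl_fix_of_mem {l : List (Submodule ℂ H)} {v : H} (h : ∀ K ∈ l, v ∈ K) : Sl l v = v := by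
  induction l with
  | nil => simp [Sl]
  | cons K t ih =>
      rw [Sl_cons, proj_of_mem (h K (by simp))]
      exact ih fun K hK => h K (by simp [hK])

lemma Sl_mem_of_norm {l : List (Submodule ℂ H)} {v : H} (h : ‖Sl l v‖ = ‖v‖) :
    ∀ K ∈ l, v ∈ K := by
  induction l generalizing v with
  | nil => simp
  | cons K t ih =>
      rw [Sl_cons] at h
      have h1 : ‖proj K v‖ = ‖v‖ := by
        have h2 := Sl_norm_le t (proj K v)
        have h3 := proj_apply_norm_le K v
        linarith [le_of_eq h.symm]
      have hm : v ∈ K := mem_of_proj_norm_eq h1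
      have hfix : proj K v = v := proj_of_mem hm
      rw [hfix] at h
      intro K' hK'
      rcases List.mem_cons.mp hK' with rfl | hK'
      · exact hm
      · exact ih h K' hK'

lemma adjoint_fix {T : H →L[ℂ] H} (hT : ‖T‖ ≤ 1) {v : H} (h : T v = v) :
    ContinuousLinearMap.adjoint T v = v := by
  set w := ContinuousLinearMap.adjoint T v with hw
  have hinner : RCLike.re (inner (𝕜 := ℂ) w v) = ‖v‖ ^ 2 := by
    rw [hw, ContinuousLinearMap.adjoint_inner_left, h, inner_self_eq_norm_sq]
  have hwle : ‖w‖ ≤ ‖v‖ := by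
    have h1 := (ContinuousLinearMap.adjoint T).le_opNorm v
    have h2 : ‖ContinuousLinearMap.adjoint T‖ = ‖T‖ :=
      (ContinuousLinearMap.adjoint (𝕜 := ℂ) (E := H) (F := H)).norm_map T
    rw [hw]
    nlinarith [norm_nonneg v]
  have hzero : ‖w - v‖ ^ 2 ≤ 0 := by
    have := @norm_sub_sq ℂ _ _ _ _ w v
    nlinarith [norm_nonneg v, norm_nonneg w]
  have : w - v = 0 := by
    have := le_antisymm hzero (by positivity)
    have := pow_eq_zero_iff (n := 2) (by norm_num) |>.mp this
    exact norm_eq_zero.mp this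
  exact sub_eq_zero.mp this

end Aux

/-- For `T = Pₙ ∘ ⋯ ∘ P₂ ∘ P₁` a product of orthogonal projections onto
subspaces `X₁, …, Xₙ`, the fixed-point set of `T`, the fixed-point set of `T†`, and the set
of vectors whose norm is preserved by `T` all coincide with `⋂ᵢ Xᵢ`. -/
theorem statement0 {H : Type*} [NormedAddCommGroup H] [InnerProductSpace ℂ H]
    [FiniteDimensional ℂ H] (n : ℕ) (X : Fin n → Submodule ℂ H)
    (T : H →L[ℂ] H)
    (hT : T = (List.ofFn fun i => proj (X i)).reverse.prod) :
    {v : H | T v = v} = ((⨅ i, X i : Submodule ℂ H) : Set H) ∧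
    {v : H | ContinuousLinearMap.adjoint T v = v} = ((⨅ i, X i : Submodule ℂ H) : Set H) ∧
    {v : H | ‖T v‖ = ‖v‖} = ((⨅ i, X i : Submodule ℂ H) : Set H) := by
  have hTl : T = Sl (List.ofFn X) := by
    rw [hT]; unfold Sl; rw [List.map_ofFn]; rfl
  have hmem : ∀ v : H, (v ∈ (⨅ i, X i : Submodule ℂ H)) ↔ ∀ K ∈ List.ofFn X, v ∈ K := by
    intro v
    rw [Submodule.mem_iInf, List.forall_mem_ofFn_iff]
  have hfix : ∀ v : H, (∀ K ∈ List.ofFn X, v ∈ K) → T v = v := by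
    intro v hv; rw [hTl]; exact Sl_fix_of_mem hv
  have hnorm : ∀ v : H, ‖T v‖ = ‖v‖ → ∀ K ∈ List.ofFn X, v ∈ K := by
    intro v hv; rw [hTl] at hv; exact Sl_mem_of_norm hv
  have hTnorm : ‖T‖ ≤ 1 := by
    refine T.opNorm_le_bound zero_le_one fun v => ?_
    rw [hTl, one_mul]; exact Sl_norm_le _ v
  have hfixset : {v : H | T v = v} = ((⨅ i, X i : Submodule ℂ H) : Set H) := by
    ext v
    simp only [Set.mem_setOf_eq, SetLike.mem_coe, hmem]
    exact ⟨fun h => hnorm v (by rw [h]), hfix v⟩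
  refine ⟨hfixset, ?_, ?_⟩
  · ext v
    simp only [Set.mem_setOf_eq, SetLike.mem_coe, hmem]
    constructor
    · intro h
      have hTv : T v = v := by
        have h2 : ‖ContinuousLinearMap.adjoint T‖ ≤ 1 := by
          rw [(ContinuousLinearMap.adjoint (𝕜 := ℂ) (E := H) (F := H)).norm_map T]; exact hTnorm
        have := adjoint_fix h2 h
        rwa [ContinuousLinearMap.adjoint_adjoint] at this
      exact hnorm v (by rw [hTv])
    · intro h
      exact adjoint_fix hTnorm (hfix v h)
  · ext v
    simp only [Set.mem_setOf_eq, SetLike.mem_coe, hmem]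
    exact ⟨hnorm v, fun h => by rw [hfix v h]⟩
end

section
/- Let X₁,…,Xₙ be subspaces of H with orthogonal projections P₁,…,Pₙ, and set T = Pₙ ∘ ⋯ ∘ P₂ ∘ P₁. For 1 ≤ i ≤ n let Qᵢ be the orthogonal projection onto ⋂_{j≤i} Xⱼ, and for 2 ≤ i ≤ n define the layer-restricted subleading singular value 𝓈ᵢ = sup{‖Pᵢ(Q_{i−1} v)‖ : v ∈ (⋂_{j≤i} Xⱼ)ᗮ, ‖v‖ = 1} (taking the sup to be 0 if the complement is trivial). Define s* = sup{‖T v‖ : v ∈ (⋂_{j≤n} Xⱼ)ᗮ, ‖v‖ = 1}. Then s*² ≤ 1 − ∏_{i=2}^{n} (1 − 𝓈ᵢ²). -/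
local notation "⟪" x ", " y "⟫" => @inner ℂ _ _ x y

section helpers

variable {H : Type*} [NormedAddCommGroup H] [InnerProductSpace ℂ H] [FiniteDimensional ℂ H]

lemma proj_apply (K : Submodule ℂ H) (x : H) : proj K x = ↑(K.orthogonalProjection x) := rfl

lemma proj_mem (K : Submodule ℂ H) (x : H) : proj K x ∈ K := (K.orthogonalProjection x).2

lemma proj_eq_self (K : Submodule ℂ H) {x : H} (hx : x ∈ K) : proj K x = x :=
  K.starProjection_eq_self_iff.mpr hx

lemma proj_inner_lr (K : Submodule ℂ H) (x y : H) : ⟪proj K x, y⟫ = ⟪x, proj K y⟫ :=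
  K.inner_starProjection_left_eq_right x y

lemma sub_proj_inner (K : Submodule ℂ H) (x : H) {m : H} (hm : m ∈ K) :
    ⟪x - proj K x, m⟫ = 0 :=
  K.starProjection_inner_eq_zero x m hm

lemma proj_pyth (K : Submodule ℂ H) (x : H) :
    ‖proj K x‖ ^ 2 + ‖x - proj K x‖ ^ 2 = ‖x‖ ^ 2 := by
  have h : ⟪proj K x, x - proj K x⟫ = 0 :=
    inner_eq_zero_symm.mp (sub_proj_inner K x (proj_mem K x))
  have hx : x = proj K x + (x - proj K x) := by abel
  calc ‖proj K x‖ ^ 2 + ‖x - proj K x‖ ^ 2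
      = ‖proj K x‖ ^ 2 + 2 * RCLike.re ⟪proj K x, x - proj K x⟫ + ‖x - proj K x‖ ^ 2 := by
        rw [h]; simp
    _ = ‖proj K x + (x - proj K x)‖ ^ 2 := (norm_add_sq _ _).symm
    _ = ‖x‖ ^ 2 := by rw [← hx]

lemma norm_proj_le (K : Submodule ℂ H) (x : H) : ‖proj K x‖ ≤ ‖x‖ := by
  have h := proj_pyth K x
  nlinarith [norm_nonneg (proj K x), norm_nonneg x, sq_nonneg ‖x - proj K x‖]

lemma proj_eq_zero (K : Submodule ℂ H) {x : H} (hx : x ∈ Kᗮ) : proj K x = 0 := by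
  rw [proj_apply, Submodule.orthogonalProjectionOnto_apply_of_mem_orthogonal hx]
  simp

/-- partial products of the projections: `Tpartial n X k = P_{k-1} ∘ ⋯ ∘ P_0`. -/
noncomputable def Tpartial (n : ℕ) (X : Fin n → Submodule ℂ H) : ℕ → (H →L[ℂ] H)
  | 0 => 1
  | (k+1) => (if h : k < n then proj (X ⟨k, h⟩) else 1) * Tpartial n X k

variable {n : ℕ} {X : Fin n → Submodule ℂ H}

lemma Tpartial_succ (k : ℕ) (h : k < n) :
    Tpartial n X (k+1) = proj (X ⟨k, h⟩) * Tpartial n X k := by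
  rw [Tpartial, dif_pos h]

lemma Tpartial_eq_prod : Tpartial n X n = (List.ofFn fun i => proj (X i)).reverse.prod := by
  have gen : ∀ k, k ≤ n →
      Tpartial n X k = ((List.ofFn fun i => proj (X i)).take k).reverse.prod := by
    intro k hk
    induction k with
    | zero => simp [Tpartial]
    | succ k ih =>
      have hkn : k < n := hk
      have hlen : k < (List.ofFn fun i => proj (X i)).length := by
        simpa using hkn
      rw [Tpartial_succ k hkn, ih (le_of_lt hkn), List.take_succ]
      rw [List.getElem?_eq_getElem hlen, List.getElem_ofFn]
      simp [List.reverse_append]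
  rw [gen n le_rfl]
  rw [show (List.ofFn fun i => proj (X i)).take n = (List.ofFn fun i => proj (X i)) by
    apply List.take_of_length_le; simp]

lemma Tpartial_apply_of_mem {k : ℕ} {m : H} (hm : ∀ j : Fin n, (j : ℕ) < k → m ∈ X j) :
    Tpartial n X k m = m := by
  induction k with
  | zero => rfl
  | succ k ih =>
    rw [Tpartial, ContinuousLinearMap.mul_apply,
      ih (fun j hj => hm j (hj.trans (Nat.lt_succ_self k)))]
    split_ifs with h
    · exact proj_eq_self _ (hm ⟨k, h⟩ (Nat.lt_succ_self k))
    · rfl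

lemma Tpartial_inner {k : ℕ} {m : H} (hm : ∀ j : Fin n, (j : ℕ) < k → m ∈ X j) (v : H) :
    ⟪Tpartial n X k v, m⟫ = ⟪v, m⟫ := by
  induction k with
  | zero => rfl
  | succ k ih =>
    rw [Tpartial, ContinuousLinearMap.mul_apply]
    split_ifs with h
    · rw [proj_inner_lr, proj_eq_self _ (hm ⟨k, h⟩ (Nat.lt_succ_self k))]
      exact ih (fun j hj => hm j (hj.trans (Nat.lt_succ_self k)))
    · exact ih (fun j hj => hm j (hj.trans (Nat.lt_succ_self k)))

lemma norm_Tpartial_le (k : ℕ) (v : H) : ‖Tpartial n X k v‖ ≤ ‖v‖ := by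
  induction k with
  | zero => exact le_rfl
  | succ k ih =>
    rw [Tpartial, ContinuousLinearMap.mul_apply]
    split_ifs with h
    · exact (norm_proj_le _ _).trans ih
    · exact ih

/-- The intersection of the first `k` of the subspaces. -/
noncomputable def Mspace (n : ℕ) (X : Fin n → Submodule ℂ H) (k : ℕ) : Submodule ℂ H :=
  ⨅ j : Fin n, ⨅ _ : (j : ℕ) < k, X j

lemma mem_Mspace {k : ℕ} {m : H} :
    m ∈ Mspace n X k ↔ ∀ j : Fin n, (j : ℕ) < k → m ∈ X j := by
  simp [Mspace, Submodule.mem_iInf]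

lemma Mspace_antitone {k l : ℕ} (h : k ≤ l) : Mspace n X l ≤ Mspace n X k := by
  intro m hm
  exact mem_Mspace.mpr fun j hj => mem_Mspace.mp hm j (lt_of_lt_of_le hj h)

end helpers

set_option maxHeartbeats 1000000 in
lemma step_arith {a a' b b' β s G m : ℝ}
    (ha0 : 0 ≤ a) (ha'0 : 0 ≤ a') (hb0 : 0 ≤ b) (hb'0 : 0 ≤ b') (hβ : 0 ≤ β)
    (hs0 : 0 ≤ s) (hs1 : s ≤ 1) (hG0 : 0 ≤ G) (hG1 : G ≤ 1)
    (ha : a ≤ s * Real.sqrt (a ^ 2 + a' ^ 2))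
    (ht2 : b ^ 2 + b' ^ 2 ≤ G * β ^ 2)
    (hm1 : m ≤ a * b) (hm2 : m ≤ a' * b') :
    a ^ 2 + b ^ 2 + 2 * m ≤ (s ^ 2 + G - s ^ 2 * G) * (a ^ 2 + a' ^ 2 + β ^ 2) := by
  have ha2 : a ^ 2 ≤ s ^ 2 * (a ^ 2 + a' ^ 2) := by
    have h1 : a ^ 2 ≤ (s * Real.sqrt (a ^ 2 + a' ^ 2)) ^ 2 := by
      apply pow_le_pow_left₀ ha0 ha
    have h2 : Real.sqrt (a ^ 2 + a' ^ 2) ^ 2 = a ^ 2 + a' ^ 2 :=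
      Real.sq_sqrt (by positivity)
    nlinarith
  rcases eq_or_lt_of_le hs0 with hseq | hspos
  · -- s = 0
    have hs' : s = 0 := hseq.symm
    subst hs'
    have haz : a = 0 := le_antisymm (by nlinarith [Real.sqrt_nonneg (a^2+a'^2)]) ha0
    have hmz : m ≤ 0 := by rw [haz] at hm1; simpa using hm1
    subst haz
    nlinarith [mul_nonneg hG0 (sq_nonneg a')]
  rcases eq_or_lt_of_le hG0 with hGeq | hGpos
  · -- G = 0
    have hG' : G = 0 := hGeq.symm
    subst hG'
    have hb2 : b ^ 2 ≤ 0 := by nlinarith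
    have hbz : b = 0 := by nlinarith
    have hb'z : b' = 0 := by nlinarith
    have hmz : m ≤ 0 := by rw [hb'z] at hm2; simpa using hm2
    subst hbz
    nlinarith [mul_nonneg (sq_nonneg s) (sq_nonneg β)]
  -- main case: s > 0, G > 0
  have hτ0 : 0 ≤ s ^ 2 + G - s ^ 2 * G := by nlinarith
  have hlam0 : 0 ≤ (1 - s ^ 2) * (1 - G) :=
    mul_nonneg (by nlinarith) (by linarith)
  have hκ : 0 ≤ s ^ 2 * G + (1 - G) * (1 - s ^ 2) ^ 2 * G ^ 2 -
      (s ^ 2 + G - s ^ 2 * G) * s ^ 2 * G ^ 2 := by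
    have h1 : 0 ≤ (G * (1 - G) ^ 2) * s ^ 2 :=
      mul_nonneg (mul_nonneg hG0 (sq_nonneg _)) (sq_nonneg _)
    have h2 : 0 ≤ G ^ 2 * (1 - G) := mul_nonneg (sq_nonneg _) (by linarith)
    have hid : s ^ 2 * G + (1 - G) * (1 - s ^ 2) ^ 2 * G ^ 2 -
        (s ^ 2 + G - s ^ 2 * G) * s ^ 2 * G ^ 2 =
        (G * (1 - G) ^ 2) * s ^ 2 + G ^ 2 * (1 - G) := by ring
    linarith [hid ▸ (add_nonneg h1 h2)]
  have L1 : 0 ≤ (1 - G) * ((1 - s ^ 2) * G * a - s ^ 2 * b) ^ 2 :=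
    mul_nonneg (by linarith) (sq_nonneg _)
  have L2 : 0 ≤ (s ^ 2 + G - s ^ 2 * G) * s ^ 2 * (G * a' - b') ^ 2 :=
    mul_nonneg (mul_nonneg hτ0 (sq_nonneg _)) (sq_nonneg _)
  have L3 : 0 ≤ 2 * s ^ 2 * G * ((1 - s ^ 2) * (1 - G)) * (a * b - m) := by
    apply mul_nonneg
    · positivity
    · linarith
  have L4 : 0 ≤ 2 * s ^ 2 * G * (s ^ 2 + G - s ^ 2 * G) * (a' * b' - m) := by
    apply mul_nonneg
    · positivity
    · linarith
  have L5 : 0 ≤ (s ^ 2 + G - s ^ 2 * G) * s ^ 2 * (G * β ^ 2 - (b ^ 2 + b' ^ 2)) :=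
    mul_nonneg (mul_nonneg hτ0 (sq_nonneg _)) (by linarith)
  have L6 : 0 ≤ (s ^ 2 * G + (1 - G) * (1 - s ^ 2) ^ 2 * G ^ 2 -
      (s ^ 2 + G - s ^ 2 * G) * s ^ 2 * G ^ 2) *
      (s ^ 2 * (a ^ 2 + a' ^ 2) - a ^ 2) :=
    mul_nonneg hκ (by linarith)
  have big : 0 ≤ s ^ 2 * G *
      ((s ^ 2 + G - s ^ 2 * G) * (a ^ 2 + a' ^ 2 + β ^ 2) - a ^ 2 - b ^ 2 - 2 * m) := by
    have hexp : s ^ 2 * G *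
        ((s ^ 2 + G - s ^ 2 * G) * (a ^ 2 + a' ^ 2 + β ^ 2) - a ^ 2 - b ^ 2 - 2 * m) =
        (1 - G) * ((1 - s ^ 2) * G * a - s ^ 2 * b) ^ 2
        + (s ^ 2 + G - s ^ 2 * G) * s ^ 2 * (G * a' - b') ^ 2
        + 2 * s ^ 2 * G * ((1 - s ^ 2) * (1 - G)) * (a * b - m)
        + 2 * s ^ 2 * G * (s ^ 2 + G - s ^ 2 * G) * (a' * b' - m)
        + (s ^ 2 + G - s ^ 2 * G) * s ^ 2 * (G * β ^ 2 - (b ^ 2 + b' ^ 2))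
        + (s ^ 2 * G + (1 - G) * (1 - s ^ 2) ^ 2 * G ^ 2 -
            (s ^ 2 + G - s ^ 2 * G) * s ^ 2 * G ^ 2) *
            (s ^ 2 * (a ^ 2 + a' ^ 2) - a ^ 2) := by
      ring
    rw [hexp]
    linarith
  have hp : 0 < s ^ 2 * G := by positivity
  have hE := (mul_nonneg_iff_of_pos_left hp).mp big
  linarith
/-- For `T = Pₙ ∘ ⋯ ∘ P₁` a product of orthogonal projections onto
subspaces `X₁, …, Xₙ` (indexed here by `i : Fin n`, zero-based), with `Qᵢ` the orthogonal
projection onto `⋂_{j ≤ i} Xⱼ`, the layer-restricted subleading singular values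
`𝓈ᵢ = sup {‖Pᵢ (Q_{i-1} v)‖ : v ∈ (⋂_{j ≤ i} Xⱼ)ᗮ, ‖v‖ = 1}` (for the layers after the
first) control the subleading singular value
`s⋆ = sup {‖T v‖ : v ∈ (⋂_j Xⱼ)ᗮ, ‖v‖ = 1}` via `s⋆² ≤ 1 − ∏_{i≥2} (1 − 𝓈ᵢ²)`.
(The suprema are `sSup`s of sets of reals; `sSup ∅ = 0` in `ℝ`.) -/
theorem statement2 {H : Type*} [NormedAddCommGroup H] [InnerProductSpace ℂ H]
    [FiniteDimensional ℂ H] (n : ℕ) (X : Fin n → Submodule ℂ H)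
    (T : H →L[ℂ] H)
    (hT : T = (List.ofFn fun i => proj (X i)).reverse.prod)
    (s : Fin n → ℝ)
    (hs : ∀ i : Fin n, 0 < (i : ℕ) →
      s i = sSup {r : ℝ | ∃ v ∈ (⨅ j ≤ i, X j)ᗮ, ‖v‖ = 1 ∧
        r = ‖proj (X i) (proj (⨅ j < i, X j) v)‖})
    (sstar : ℝ)
    (hsstar : sstar = sSup {r : ℝ | ∃ v ∈ (⨅ j, X j)ᗮ, ‖v‖ = 1 ∧ r = ‖T v‖}) :
    sstar ^ 2 ≤ 1 - ∏ i ∈ Finset.univ.filter (fun i : Fin n => 0 < (i : ℕ)), (1 - s i ^ 2) := by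
  classical
  have hTT : T = Tpartial n X n := by rw [hT, Tpartial_eq_prod]
  -- rewrite the iInf's appearing in `hs` in terms of `Mspace`
  have e1 : ∀ (k : ℕ) (hk : k < n), (⨅ j ≤ (⟨k, hk⟩ : Fin n), X j) = Mspace n X (k+1) := by
    intro k hk
    exact iInf_congr fun j => iInf_congr_Prop
      (by simp [Fin.le_def, Nat.lt_succ_iff]) (fun _ => rfl)
  have e2 : ∀ (k : ℕ) (hk : k < n), (⨅ j < (⟨k, hk⟩ : Fin n), X j) = Mspace n X k := by
    intro k hk
    exact iInf_congr fun j => iInf_congr_Prop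
      (by simp [Fin.lt_def]) (fun _ => rfl)
  -- basic bounds on the numbers `s i`
  have hs0 : ∀ i : Fin n, 0 < (i : ℕ) → 0 ≤ s i := by
    intro i hi
    rw [hs i hi]
    apply Real.sSup_nonneg
    rintro r ⟨v, hv, hv1, rfl⟩
    exact norm_nonneg _
  have hs1 : ∀ i : Fin n, 0 < (i : ℕ) → s i ≤ 1 := by
    intro i hi
    rw [hs i hi]
    apply Real.sSup_le _ zero_le_one
    rintro r ⟨v, hv, hv1, rfl⟩
    calc ‖proj (X i) (proj (⨅ j < i, X j) v)‖ ≤ ‖proj (⨅ j < i, X j) v‖ := norm_proj_le _ _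
      _ ≤ ‖v‖ := norm_proj_le _ _
      _ = 1 := hv1
  -- the layer bound, in scaled form
  have hsbound : ∀ (k : ℕ) (hk : k < n), 0 < k → ∀ v ∈ (Mspace n X (k+1))ᗮ,
      ‖proj (X ⟨k, hk⟩) (proj (Mspace n X k) v)‖ ≤ s ⟨k, hk⟩ * ‖v‖ := by
    intro k hk h0 v hv
    rcases eq_or_ne v 0 with rfl | hvne
    · simp
    · have hc : (0:ℝ) < ‖v‖ := norm_pos_iff.mpr hvne
      set v' : H := ((‖v‖ : ℂ))⁻¹ • v with hv'def
      have hv'1 : ‖v'‖ = 1 := by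
        rw [hv'def, norm_smul]
        simp [hc.ne']
      have hv'mem : v' ∈ (Mspace n X (k+1))ᗮ := Submodule.smul_mem _ _ hv
      have hbdd : BddAbove {r : ℝ | ∃ w ∈ (⨅ j ≤ (⟨k, hk⟩ : Fin n), X j)ᗮ, ‖w‖ = 1 ∧
          r = ‖proj (X ⟨k, hk⟩) (proj (⨅ j < (⟨k, hk⟩ : Fin n), X j) w)‖} := by
        refine ⟨1, ?_⟩
        rintro r ⟨w, hw, hw1, rfl⟩
        calc ‖proj (X ⟨k, hk⟩) (proj (⨅ j < (⟨k, hk⟩ : Fin n), X j) w)‖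
            ≤ ‖proj (⨅ j < (⟨k, hk⟩ : Fin n), X j) w‖ := norm_proj_le _ _
          _ ≤ ‖w‖ := norm_proj_le _ _
          _ = 1 := hw1
      have hmem : ‖proj (X ⟨k, hk⟩) (proj (Mspace n X k) v')‖ ∈
          {r : ℝ | ∃ w ∈ (⨅ j ≤ (⟨k, hk⟩ : Fin n), X j)ᗮ, ‖w‖ = 1 ∧
            r = ‖proj (X ⟨k, hk⟩) (proj (⨅ j < (⟨k, hk⟩ : Fin n), X j) w)‖} := by
        refine ⟨v', ?_, hv'1, by rw [e2 k hk]⟩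
        rw [e1 k hk]
        exact hv'mem
      have hle : ‖proj (X ⟨k, hk⟩) (proj (Mspace n X k) v')‖ ≤ s ⟨k, hk⟩ := by
        rw [hs ⟨k, hk⟩ h0]
        exact le_csSup hbdd hmem
      have hsc : proj (X ⟨k, hk⟩) (proj (Mspace n X k) v') =
          ((‖v‖ : ℂ))⁻¹ • proj (X ⟨k, hk⟩) (proj (Mspace n X k) v) := by
        rw [hv'def, map_smul, map_smul]
      rw [hsc, norm_smul] at hle
      have hninv : ‖((‖v‖ : ℂ))⁻¹‖ = ‖v‖⁻¹ := by
        simp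
      rw [hninv] at hle
      have := mul_le_mul_of_nonneg_left hle (le_of_lt hc)
      rw [← mul_assoc, mul_inv_cancel₀ hc.ne', one_mul] at this
      linarith [this]
  -- the partial products `PP`
  set PP : ℕ → ℝ := fun k => ∏ i ∈ (Finset.range k).filter (fun i => 0 < i),
    (1 - (if h : i < n then s ⟨i, h⟩ else 0) ^ 2) with hPPdef
  have hPP01 : ∀ k, k ≤ n → (0 ≤ PP k ∧ PP k ≤ 1) := by
    intro k hkn
    have hfac : ∀ i ∈ (Finset.range k).filter (fun i => 0 < i),
        (0 ≤ 1 - (if h : i < n then s ⟨i, h⟩ else 0) ^ 2 ∧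
         1 - (if h : i < n then s ⟨i, h⟩ else 0) ^ 2 ≤ 1) := by
      intro i hi
      simp only [Finset.mem_filter, Finset.mem_range] at hi
      have hin : i < n := lt_of_lt_of_le hi.1 hkn
      rw [dif_pos hin]
      have h0 := hs0 ⟨i, hin⟩ hi.2
      have h1 := hs1 ⟨i, hin⟩ hi.2
      constructor
      · nlinarith
      · nlinarith
    constructor
    · exact Finset.prod_nonneg fun i hi => (hfac i hi).1
    · exact Finset.prod_le_one (fun i hi => (hfac i hi).1) (fun i hi => (hfac i hi).2)
  have hPPsucc : ∀ (k : ℕ) (hk : k < n), 0 < k →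
      PP (k+1) = (1 - s ⟨k, hk⟩ ^ 2) * PP k := by
    intro k hk h0
    rw [hPPdef]
    simp only
    rw [Finset.range_add_one, Finset.filter_insert, if_pos h0,
      Finset.prod_insert (by simp)]
    rw [dif_pos hk]
  -- the key induction
  have key : ∀ k, k ≤ n → ∀ v ∈ (Mspace n X k)ᗮ,
      ‖Tpartial n X k v‖ ^ 2 ≤ (1 - PP k) * ‖v‖ ^ 2 := by
    intro k
    induction k with
    | zero =>
      intro _ v hv
      have hM0 : Mspace n X 0 = ⊤ := by
        apply le_antisymm le_top
        exact le_iInf fun j => le_iInf fun hj => absurd hj (Nat.not_lt_zero _)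
      rw [hM0, Submodule.top_orthogonal_eq_bot] at hv
      have hv0 : v = 0 := (Submodule.mem_bot ℂ).mp hv
      subst hv0
      have hPP0 : PP 0 = 1 := by simp [hPPdef]
      rw [hPP0]
      simp [Tpartial]
    | succ k ih =>
      intro hk1 v hv
      have hk : k < n := hk1
      rcases Nat.eq_zero_or_pos k with rfl | h0
      · -- k = 0 : T₁ v = P₀ v = 0
        have hM1 : Mspace n X 1 = X ⟨0, hk⟩ := by
          apply le_antisymm
          · intro m hm
            exact mem_Mspace.mp hm ⟨0, hk⟩ Nat.zero_lt_one
          · intro m hm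
            refine mem_Mspace.mpr fun j hj => ?_
            have hj0 : (j : ℕ) = 0 := Nat.lt_one_iff.mp hj
            have : j = ⟨0, hk⟩ := Fin.ext (by simp [hj0])
            rwa [this]
        rw [hM1] at hv
        have hT1 : Tpartial n X 1 v = 0 := by
          rw [Tpartial_succ 0 hk, ContinuousLinearMap.mul_apply]
          show proj (X ⟨0, hk⟩) (Tpartial n X 0 v) = 0
          have : Tpartial n X 0 v = v := rfl
          rw [this]
          exact proj_eq_zero _ hv
        rw [hT1]
        have hPP1 : PP 1 = 1 := by
          rw [hPPdef]
          simp only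
          rw [Finset.range_one, Finset.filter_singleton, if_neg (lt_irrefl 0),
            Finset.prod_empty]
        rw [hPP1]
        simp
      · -- main inductive step, k ≥ 1
        set u : H := proj (Mspace n X k) v with hudef
        set w : H := v - u with hwdef
        set y : H := Tpartial n X k w with hydef
        set A : H := proj (X ⟨k, hk⟩) u with hAdef
        set B : H := proj (X ⟨k, hk⟩) y with hBdef
        have hu_mem : u ∈ Mspace n X k := proj_mem _ _
        have hw_orth : ∀ m' ∈ Mspace n X k, ⟪w, m'⟫ = 0 := fun m' hm' =>
          sub_proj_inner _ v hm'
        have hw_in : w ∈ (Mspace n X k)ᗮ := (Submodule.mem_orthogonal' _ _).mpr hw_orth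
        have hpyth_v : ‖u‖ ^ 2 + ‖w‖ ^ 2 = ‖v‖ ^ 2 := proj_pyth _ v
        have hIH : ‖y‖ ^ 2 ≤ (1 - PP k) * ‖w‖ ^ 2 := ih (le_of_lt hk) w hw_in
        have hu_orth : u ∈ (Mspace n X (k+1))ᗮ := by
          apply (Submodule.mem_orthogonal' _ _).mpr
          intro m hm
          have hvm : ⟪v, m⟫ = 0 := (Submodule.mem_orthogonal' _ _).mp hv m hm
          have hwm : ⟪w, m⟫ = 0 := hw_orth m (Mspace_antitone (Nat.le_succ k) hm)
          have : u = v - w := by rw [hwdef]; abel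
          rw [this, inner_sub_left, hvm, hwm]
          simp
        have ha : ‖A‖ ≤ s ⟨k, hk⟩ * ‖u‖ := by
          have := hsbound k hk h0 u hu_orth
          rwa [proj_eq_self _ hu_mem] at this
        have hmemu : ∀ j : Fin n, (j : ℕ) < k → u ∈ X j := mem_Mspace.mp hu_mem
        have hTv : Tpartial n X (k+1) v = A + B := by
          rw [Tpartial_succ k hk, ContinuousLinearMap.mul_apply]
          have hvuw : v = u + w := by rw [hwdef]; abel
          have : Tpartial n X k v = u + y := by
            rw [hvuw, map_add, Tpartial_apply_of_mem hmemu, hydef]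
          rw [this, map_add]
        have huy : ⟪u, y⟫ = 0 := by
          apply inner_eq_zero_symm.mp
          rw [hydef, Tpartial_inner hmemu w]
          exact hw_orth u hu_mem
        have hABy : ⟪A, y⟫ = ⟪u, B⟫ := proj_inner_lr _ u y
        have hABB : ⟪A, B⟫ = ⟪u, B⟫ := by
          rw [hAdef, proj_inner_lr, proj_eq_self _ (proj_mem _ _)]
        have hcross : ⟪A, B⟫ = ⟪A - u, y - B⟫ := by
          rw [inner_sub_left, inner_sub_right, inner_sub_right, hABy, hABB, huy]
          ring
        have hm1 : RCLike.re ⟪A, B⟫ ≤ ‖A‖ * ‖B‖ := re_inner_le_norm A B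
        have hm2 : RCLike.re ⟪A, B⟫ ≤ ‖u - A‖ * ‖y - B‖ := by
          rw [hcross]
          calc RCLike.re ⟪A - u, y - B⟫ ≤ ‖A - u‖ * ‖y - B‖ := re_inner_le_norm _ _
            _ = ‖u - A‖ * ‖y - B‖ := by rw [norm_sub_rev]
        have hpyth_u : ‖A‖ ^ 2 + ‖u - A‖ ^ 2 = ‖u‖ ^ 2 := proj_pyth _ u
        have hpyth_y : ‖B‖ ^ 2 + ‖y - B‖ ^ 2 = ‖y‖ ^ 2 := proj_pyth _ y
        have hnorm : ‖A + B‖ ^ 2 = ‖A‖ ^ 2 + 2 * RCLike.re ⟪A, B⟫ + ‖B‖ ^ 2 :=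
          norm_add_sq A B
        -- apply the arithmetic lemma
        have hsqrt : Real.sqrt (‖A‖ ^ 2 + ‖u - A‖ ^ 2) = ‖u‖ := by
          rw [hpyth_u]
          exact Real.sqrt_sq (norm_nonneg u)
        have harg : ‖A‖ ≤ s ⟨k, hk⟩ * Real.sqrt (‖A‖ ^ 2 + ‖u - A‖ ^ 2) := by
          rw [hsqrt]; exact ha
        have ht2 : ‖B‖ ^ 2 + ‖y - B‖ ^ 2 ≤ (1 - PP k) * ‖w‖ ^ 2 := by
          rw [hpyth_y]; exact hIH
        have hstep := step_arith (norm_nonneg A) (norm_nonneg (u - A)) (norm_nonneg B)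
          (norm_nonneg (y - B)) (norm_nonneg w) (hs0 ⟨k, hk⟩ h0) (hs1 ⟨k, hk⟩ h0)
          (by linarith [(hPP01 k (le_of_lt hk)).2])
          (by linarith [(hPP01 k (le_of_lt hk)).1])
          harg ht2 hm1 hm2
        have hfin : ‖Tpartial n X (k+1) v‖ ^ 2 ≤
            (s ⟨k, hk⟩ ^ 2 + (1 - PP k) - s ⟨k, hk⟩ ^ 2 * (1 - PP k)) * ‖v‖ ^ 2 := by
          rw [hTv, hnorm]
          calc ‖A‖ ^ 2 + 2 * RCLike.re ⟪A, B⟫ + ‖B‖ ^ 2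
              ≤ (s ⟨k, hk⟩ ^ 2 + (1 - PP k) - s ⟨k, hk⟩ ^ 2 * (1 - PP k)) *
                (‖A‖ ^ 2 + ‖u - A‖ ^ 2 + ‖w‖ ^ 2) := by linarith [hstep]
            _ = (s ⟨k, hk⟩ ^ 2 + (1 - PP k) - s ⟨k, hk⟩ ^ 2 * (1 - PP k)) * ‖v‖ ^ 2 := by
                rw [hpyth_u]; rw [hpyth_v]
        have hco : s ⟨k, hk⟩ ^ 2 + (1 - PP k) - s ⟨k, hk⟩ ^ 2 * (1 - PP k) =
            1 - PP (k+1) := by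
          rw [hPPsucc k hk h0]; ring
        rwa [hco] at hfin
  -- conclude
  have hMn : Mspace n X n = ⨅ j, X j := by
    exact iInf_congr fun j => iInf_pos j.isLt
  have hB0 : 0 ≤ 1 - PP n := by linarith [(hPP01 n le_rfl).2]
  have hub : ∀ r ∈ {r : ℝ | ∃ v ∈ (⨅ j, X j)ᗮ, ‖v‖ = 1 ∧ r = ‖T v‖},
      r ≤ Real.sqrt (1 - PP n) := by
    rintro r ⟨v, hv, hv1, rfl⟩
    have hv' : v ∈ (Mspace n X n)ᗮ := by rw [hMn]; exact hv
    have hkey := key n le_rfl v hv'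
    rw [hv1] at hkey
    rw [hTT]
    exact (Real.le_sqrt (norm_nonneg _) hB0).mpr (by nlinarith [hkey])
  have hsle : sstar ≤ Real.sqrt (1 - PP n) := by
    rw [hsstar]; exact Real.sSup_le hub (Real.sqrt_nonneg _)
  have hsnn : 0 ≤ sstar := by
    rw [hsstar]
    apply Real.sSup_nonneg
    rintro r ⟨v, hv, hv1, rfl⟩
    exact norm_nonneg _
  have hsq : sstar ^ 2 ≤ 1 - PP n := by
    calc sstar ^ 2 ≤ Real.sqrt (1 - PP n) ^ 2 := pow_le_pow_left₀ hsnn hsle 2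
      _ = 1 - PP n := Real.sq_sqrt hB0
  have hprod : PP n = ∏ i ∈ Finset.univ.filter (fun i : Fin n => 0 < (i : ℕ)),
      (1 - s i ^ 2) := by
    rw [hPPdef]
    simp only
    rw [Finset.prod_filter, Finset.prod_filter]
    rw [← Fin.prod_univ_eq_prod_range
      (fun i => if 0 < i then (1 - (if h : i < n then s ⟨i, h⟩ else 0) ^ 2) else 1) n]
    apply Finset.prod_congr rfl
    intro i _
    by_cases h0 : 0 < (i : ℕ)
    · rw [if_pos h0, if_pos h0, dif_pos i.isLt]
    · rw [if_neg h0, if_neg h0]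
  rw [hprod] at hsq
  exact hsq
end

section
/- Let X₁,…,Xₙ be subspaces of H with orthogonal projections P₁,…,Pₙ, and set T = Pₙ ∘ ⋯ ∘ P₂ ∘ P₁. Define s* = sup{‖T v‖ : v ∈ (⋂_{j≤n} Xⱼ)ᗮ, ‖v‖ = 1}. If v ∈ H is a nonzero vector with T v = λ v for some complex λ ≠ 1, then |λ| ≤ s*. -/
lemma list_prod_fix {H : Type*} [NormedAddCommGroup H] [InnerProductSpace ℂ H]
    (L : List (H →L[ℂ] H)) (z : H) (h : ∀ A ∈ L, A z = z) : L.prod z = z := by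
  induction L with
  | nil => simp
  | cons a l ih =>
    rw [List.prod_cons, ContinuousLinearMap.mul_apply,
      ih (fun A hA => h A (List.mem_cons_of_mem _ hA)), h a (List.mem_cons_self)]

lemma list_prod_maps_orth {H : Type*} [NormedAddCommGroup H] [InnerProductSpace ℂ H]
    [FiniteDimensional ℂ H] (Z : Submodule ℂ H) (L : List (H →L[ℂ] H))
    (hsa : ∀ A ∈ L, IsSelfAdjoint A) (hfix : ∀ A ∈ L, ∀ z ∈ Z, A z = z)
    (w : H) (hw : w ∈ Zᗮ) : L.prod w ∈ Zᗮ := by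
  induction L with
  | nil => simpa using hw
  | cons a l ih =>
    rw [List.prod_cons, ContinuousLinearMap.mul_apply]
    have hlw : l.prod w ∈ Zᗮ :=
      ih (fun A hA => hsa A (List.mem_cons_of_mem _ hA))
        (fun A hA => hfix A (List.mem_cons_of_mem _ hA))
    rw [Submodule.mem_orthogonal]
    intro z hz
    have hsym := ((ContinuousLinearMap.isSelfAdjoint_iff_isSymmetric).mp
      (hsa a (List.mem_cons_self))) z (l.prod w)
    calc inner ℂ z (a (l.prod w)) = inner ℂ (a z) (l.prod w) := hsym.symm
      _ = inner ℂ z (l.prod w) := by rw [hfix a (List.mem_cons_self) z hz]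
      _ = 0 := (Submodule.mem_orthogonal _ _).mp hlw z hz

/-- Let `T = Pₙ ∘ ⋯ ∘ P₁` be a product of orthogonal projections onto
subspaces `X₁, …, Xₙ` and let
`s⋆ = sup {‖T v‖ : v ∈ (⋂_j Xⱼ)ᗮ, ‖v‖ = 1}` be its subleading singular value.
If `v ≠ 0` satisfies `T v = λ • v` with `λ ≠ 1`, then `|λ| ≤ s⋆`. -/
theorem statement3 {H : Type*} [NormedAddCommGroup H] [InnerProductSpace ℂ H]
    [FiniteDimensional ℂ H] (n : ℕ) (X : Fin n → Submodule ℂ H)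
    (T : H →L[ℂ] H)
    (hT : T = (List.ofFn fun i => proj (X i)).reverse.prod)
    (sstar : ℝ)
    (hsstar : sstar = sSup {r : ℝ | ∃ v ∈ (⨅ j, X j)ᗮ, ‖v‖ = 1 ∧ r = ‖T v‖})
    (v : H) (lam : ℂ) (hv : v ≠ 0) (heig : T v = lam • v) (hlam : lam ≠ 1) :
    ‖lam‖ ≤ sstar := by
  set Z := ⨅ j, X j with hZ
  set L := (List.ofFn fun i => proj (X i)).reverse with hL
  have hmem : ∀ A ∈ L, ∃ i, A = proj (X i) := by
    intro A hA
    rw [hL, List.mem_reverse, List.mem_ofFn] at hA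
    obtain ⟨i, hi⟩ := hA
    exact ⟨i, hi.symm⟩
  have hfix : ∀ A ∈ L, ∀ z ∈ Z, A z = z := by
    intro A hA z hz
    obtain ⟨i, rfl⟩ := hmem A hA
    have hzi : z ∈ X i := (Submodule.mem_iInf _).mp hz i
    exact (X i).starProjection_eq_self_iff.mpr hzi
  have hsa : ∀ A ∈ L, IsSelfAdjoint A := by
    intro A hA
    obtain ⟨i, rfl⟩ := hmem A hA
    exact isSelfAdjoint_starProjection (X i)
  -- T fixes Z and maps Zᗮ to Zᗮ
  have hTfix : ∀ z ∈ Z, T z = z := fun z hz => by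
    rw [hT]; exact list_prod_fix L z (fun A hA => hfix A hA z hz)
  have hTorth : ∀ w ∈ Zᗮ, T w ∈ Zᗮ := fun w hw => by
    rw [hT]; exact list_prod_maps_orth Z L hsa hfix w hw
  -- decompose v
  set z := (Z.orthogonalProjection v : H) with hzdef
  set w := v - z with hwdef
  have hzZ : z ∈ Z := Submodule.coe_mem _
  have hwZ : w ∈ Zᗮ := Z.sub_starProjection_mem_orthogonal v
  have hvzw : v = z + w := by rw [hwdef]; abel
  -- uniqueness of decomposition forces z = lam • z
  have key : z - lam • z = lam • w - T w := by
    have h1 : T v = z + T w := by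
      rw [hvzw, map_add, hTfix z hzZ]
    have h2 : lam • v = lam • z + lam • w := by rw [hvzw, smul_add]
    have := heig
    rw [h1, h2] at this
    linear_combination (norm := abel) this
  have hzside : z - lam • z ∈ Z := Z.sub_mem hzZ (Z.smul_mem _ hzZ)
  have hwside : z - lam • z ∈ Zᗮ := key ▸ Zᗮ.sub_mem (Zᗮ.smul_mem _ hwZ) (hTorth w hwZ)
  have hzero : z - lam • z = 0 := by
    have := Submodule.orthogonal_disjoint Z
    exact (Submodule.disjoint_def.mp this) _ hzside hwside
  have hz0 : z = 0 := by
    have : (1 - lam) • z = 0 := by rw [sub_smul, one_smul]; exact hzero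
    rcases smul_eq_zero.mp this with h | h
    · exact absurd (by linear_combination -h : lam = 1) hlam
    · exact h
  have hvorth : v ∈ Zᗮ := by rw [hvzw, hz0, zero_add]; exact hwZ
  -- now the norm estimate
  have hvn : ‖v‖ ≠ 0 := norm_ne_zero_iff.mpr hv
  set u := ‖v‖⁻¹ • v with hu
  have huZ : u ∈ Zᗮ := Zᗮ.smul_mem _ hvorth
  have hun : ‖u‖ = 1 := by
    rw [hu, norm_smul, norm_inv, norm_norm, inv_mul_cancel₀ hvn]
  have hTu : ‖T u‖ = ‖lam‖ := by
    have h1 : T u = ‖v‖⁻¹ • (lam • v) := by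
      rw [hu, ContinuousLinearMap.map_smul_of_tower, heig]
    rw [h1, norm_smul, norm_smul, norm_inv, norm_norm, mul_comm ‖lam‖, ← mul_assoc,
      inv_mul_cancel₀ hvn, one_mul]
  have hmem' : ‖lam‖ ∈ {r : ℝ | ∃ v ∈ Zᗮ, ‖v‖ = 1 ∧ r = ‖T v‖} :=
    ⟨u, huZ, hun, hTu.symm⟩
  have hbdd : BddAbove {r : ℝ | ∃ v ∈ Zᗮ, ‖v‖ = 1 ∧ r = ‖T v‖} := by
    refine ⟨‖T‖, ?_⟩
    rintro r ⟨x, _, hx1, rfl⟩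
    calc ‖T x‖ ≤ ‖T‖ * ‖x‖ := T.le_opNorm x
      _ = ‖T‖ := by rw [hx1, mul_one]
  rw [hsstar]
  exact le_csSup hbdd hmem'
end

section
/- Let X₁,…,Xₙ be subspaces of H with orthogonal projections P₁,…,Pₙ, and set T = Pₙ ∘ ⋯ ∘ P₂ ∘ P₁. Let d = dim H, m₁ = dim(⋂ᵢ Xᵢ), m₀ = dim(ker T), and s* = sup{‖T v‖ : v ∈ (⋂ᵢ Xᵢ)ᗮ, ‖v‖ = 1}. Then the squared Frobenius norm of T satisfies tr(T† T) ≤ m₁ + (d − m₁ − m₀) · s*². -/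
open scoped InnerProductSpace
open Module Submodule


open scoped ComplexOrder

section aux
variable {H : Type*} [NormedAddCommGroup H] [InnerProductSpace ℂ H] [FiniteDimensional ℂ H]

lemma trace_eq_sum_inner' {ι : Type*} [Fintype ι] [DecidableEq ι]
    (b : OrthonormalBasis ι ℂ H) (f : H →ₗ[ℂ] H) :
    LinearMap.trace ℂ H f = ∑ i, ⟪b i, f (b i)⟫_ℂ := by
  rw [LinearMap.trace_eq_matrix_trace ℂ b.toBasis, Matrix.trace]
  simp [Matrix.diag, LinearMap.toMatrix_apply, OrthonormalBasis.coe_toBasis_repr_apply,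
    OrthonormalBasis.repr_apply_apply, OrthonormalBasis.coe_toBasis]

lemma list_prod_fix_s6 (K : Submodule ℂ H) (L : List (H →L[ℂ] H))
    (h : ∀ g ∈ L, ∀ v ∈ K, g v = v) : ∀ v ∈ K, L.prod v = v := by
  induction L with
  | nil => simp
  | cons g L ih =>
    intro v hv
    rw [List.prod_cons, ContinuousLinearMap.mul_apply, ih (fun g hg => h g (by simp [hg])) v hv,
      h g (by simp) v hv]

lemma list_prod_inv (K : Submodule ℂ H) (L : List (H →L[ℂ] H))
    (h : ∀ g ∈ L, ∀ v ∈ Kᗮ, g v ∈ Kᗮ) : ∀ v ∈ Kᗮ, L.prod v ∈ Kᗮ := by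
  induction L with
  | nil => simp
  | cons g L ih =>
    intro v hv
    rw [List.prod_cons, ContinuousLinearMap.mul_apply]
    exact h g (by simp) _ (ih (fun g hg => h g (by simp [hg])) v hv)

end aux

set_option linter.unusedSectionVars false

/-- Let `T = Pₙ ∘ ⋯ ∘ P₁` be a product of orthogonal projections onto
subspaces `X₁, …, Xₙ` of `H`, `d = dim H`, `m₁ = dim ⋂ᵢ Xᵢ`, `m₀ = dim ker T`, and
`s⋆ = sup {‖T v‖ : v ∈ (⋂ᵢ Xᵢ)ᗮ, ‖v‖ = 1}`.  Then the squared Frobenius norm satisfies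
`tr(T† T) ≤ m₁ + (d − m₁ − m₀) s⋆²` (an inequality of complex numbers in the complex
order, the right-hand side being a real number). -/
theorem statement6 {H : Type*} [NormedAddCommGroup H] [InnerProductSpace ℂ H]
    [FiniteDimensional ℂ H] (n : ℕ) (X : Fin n → Submodule ℂ H)
    (T : H →L[ℂ] H)
    (hT : T = (List.ofFn fun i => proj (X i)).reverse.prod)
    (sstar : ℝ)
    (hsstar : sstar = sSup {r : ℝ | ∃ v ∈ (⨅ i, X i)ᗮ, ‖v‖ = 1 ∧ r = ‖T v‖}) :
    LinearMap.trace ℂ H ((ContinuousLinearMap.adjoint T ∘L T : H →L[ℂ] H) : H →ₗ[ℂ] H) ≤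
      (((Module.finrank ℂ ↥(⨅ i, X i) : ℝ) +
        ((Module.finrank ℂ H : ℝ) - (Module.finrank ℂ ↥(⨅ i, X i) : ℝ) -
          (Module.finrank ℂ ↥(LinearMap.ker (T : H →ₗ[ℂ] H)) : ℝ)) * sstar ^ 2 : ℝ) : ℂ) := by
  classical
  set K := ⨅ i, X i with hK
  -- projections fix K and preserve Kᗮ
  have hprojfix : ∀ i : Fin n, ∀ v ∈ K, proj (X i) v = v := by
    intro i v hv
    exact (X i).starProjection_eq_self_iff.mpr ((iInf_le X i) hv)
  have hprojinv : ∀ i : Fin n, ∀ v ∈ Kᗮ, proj (X i) v ∈ Kᗮ := by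
    intro i v hv
    rw [Submodule.mem_orthogonal] at hv ⊢
    intro u hu
    have : (⟪(orthogonalProjection (X i) u : H), v⟫_ℂ) = ⟪u, (orthogonalProjection (X i) v : H)⟫_ℂ :=
      Submodule.inner_starProjection_left_eq_right _ u v
    have hu' : (orthogonalProjection (X i) u : H) = u :=
      (X i).starProjection_eq_self_iff.mpr ((iInf_le X i) hu)
    rw [hu'] at this
    calc ⟪u, proj (X i) v⟫_ℂ = ⟪u, v⟫_ℂ := this.symm
      _ = 0 := hv u hu
  have hfix : ∀ v ∈ K, T v = v := by
    rw [hT]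
    refine list_prod_fix_s6 K _ ?_
    intro g hg
    rw [List.mem_reverse, List.mem_ofFn] at hg
    obtain ⟨i, rfl⟩ := hg
    exact hprojfix i
  have hinv : ∀ v ∈ Kᗮ, T v ∈ Kᗮ := by
    rw [hT]
    refine list_prod_inv K _ ?_
    intro g hg
    rw [List.mem_reverse, List.mem_ofFn] at hg
    obtain ⟨i, rfl⟩ := hg
    exact hprojinv i
  set N : Submodule ℂ H := LinearMap.ker (T : H →ₗ[ℂ] H) with hN
  have hNK : N ≤ Kᗮ := by
    intro v hv
    have hv0 : T v = 0 := hv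
    set w : H := v - (orthogonalProjection K v : H) with hw
    have hwmem : w ∈ Kᗮ := Submodule.sub_starProjection_mem_orthogonal v
    have hTv : T v = (orthogonalProjection K v : H) + T w := by
      have : v = (orthogonalProjection K v : H) + w := by rw [hw]; abel
      rw [this, map_add, hfix _ (orthogonalProjection K v).2]
      simp [hw]
    have hmem : (orthogonalProjection K v : H) ∈ K ⊓ Kᗮ := by
      constructor
      · exact (orthogonalProjection K v).2
      · have : (orthogonalProjection K v : H) = -(T w) := by
          have h := hTv; rw [hv0] at h
          exact eq_neg_of_add_eq_zero_left h.symm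
        rw [this]
        exact neg_mem (hinv w hwmem)
      
    have h0 : (orthogonalProjection K v : H) = 0 := by
      rw [(Submodule.orthogonal_disjoint K).eq_bot] at hmem
      simpa using hmem
    have : v = w := by rw [hw, h0]; abel
    rw [this]; exact hwmem
  set W : Submodule ℂ H := Nᗮ ⊓ Kᗮ with hW
  set V : Fin 3 → Submodule ℂ H := ![K, N, W] with hV
  have hWK : W ≤ Kᗮ := inf_le_right
  have hWN : W ≤ Nᗮ := inf_le_left
  -- orthogonal family
  have hVfam : OrthogonalFamily ℂ (fun i => V i) (fun i => (V i).subtypeₗᵢ) := by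
    intro i j hij v w
    have key : ∀ (A B : Submodule ℂ H), B ≤ Aᗮ → ∀ x : A, ∀ y : B, ⟪(x:H), (y:H)⟫_ℂ = 0 := by
      intro A B hBA x y
      exact (Submodule.mem_orthogonal A (y:H)).mp (hBA y.2) x x.2
    have key' : ∀ (A B : Submodule ℂ H), B ≤ Aᗮ → ∀ x : B, ∀ y : A, ⟪(x:H), (y:H)⟫_ℂ = 0 := by
      intro A B hBA x y
      rw [inner_eq_zero_symm]; exact key A B hBA y x
    fin_cases i <;> fin_cases j
    · exact absurd rfl hij
    · exact key K N hNK v w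
    · exact key K W hWK v w
    · exact key' K N hNK v w
    · exact absurd rfl hij
    · exact key N W hWN v w
    · exact key' K W hWK v w
    · exact key' N W hWN v w
    · exact absurd rfl hij
  have hsup : iSup V = ⊤ := by
    have h1 : N ⊔ W = Kᗮ := by
      rw [hW]; exact Submodule.sup_orthogonal_inf_of_hasOrthogonalProjection hNK
    have h2 : K ⊔ Kᗮ = ⊤ := Submodule.sup_orthogonal_of_hasOrthogonalProjection
    refine top_unique ?_
    rw [← h2, ← h1]
    refine sup_le (le_iSup V 0) (sup_le (le_iSup V 1) (le_iSup V 2))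
  have hInt : DirectSum.IsInternal V :=
    hVfam.isInternal_iff.mpr (by rw [hsup, Submodule.top_orthogonal_eq_bot])
  set b := hInt.collectedOrthonormalBasis hVfam (fun i => stdOrthonormalBasis ℂ (V i)) with hb
  have hbmem : ∀ a, b a ∈ V a.1 := fun a =>
    hInt.collectedOrthonormalBasis_mem hVfam (fun i => stdOrthonormalBasis ℂ (V i)) a
  have hbnorm : ∀ a, ‖b a‖ = 1 := fun a => b.orthonormal.1 a
  -- trace computation
  have htr : LinearMap.trace ℂ H ((ContinuousLinearMap.adjoint T ∘L T : H →L[ℂ] H) : H →ₗ[ℂ] H)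
      = ((∑ a, ‖T (b a)‖ ^ 2 : ℝ) : ℂ) := by
    rw [trace_eq_sum_inner' b]
    have he : ∀ a, ⟪b a, ((ContinuousLinearMap.adjoint T ∘L T : H →L[ℂ] H) : H →ₗ[ℂ] H) (b a)⟫_ℂ
        = ((‖T (b a)‖ ^ 2 : ℝ) : ℂ) := by
      intro a
      rw [ContinuousLinearMap.coe_coe, ContinuousLinearMap.comp_apply,
        ContinuousLinearMap.adjoint_inner_right, inner_self_eq_norm_sq_to_K]
      norm_cast
    rw [Finset.sum_congr rfl fun a _ => he a]
    push_cast; ring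
  rw [htr, Complex.real_le_real]
  -- bound by sstar
  have hbdd : BddAbove {r : ℝ | ∃ v ∈ Kᗮ, ‖v‖ = 1 ∧ r = ‖T v‖} := by
    refine ⟨‖T‖, ?_⟩
    rintro r ⟨v, hv, h1, rfl⟩
    calc ‖T v‖ ≤ ‖T‖ * ‖v‖ := T.le_opNorm v
      _ = ‖T‖ := by rw [h1, mul_one]
  have hsle : ∀ v ∈ Kᗮ, ‖v‖ = 1 → ‖T v‖ ≤ sstar := by
    intro v hv h1
    rw [hsstar]
    exact le_csSup hbdd ⟨v, hv, h1, rfl⟩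
  -- split the sum
  rw [← Finset.univ_sigma_univ, Finset.sum_sigma, Fin.sum_univ_three]
  have e0 : ∀ j, ‖T (b ⟨0, j⟩)‖ ^ 2 = 1 := by
    intro j
    rw [hfix _ (hbmem ⟨0, j⟩), hbnorm ⟨0, j⟩]; norm_num
  have e1 : ∀ j, ‖T (b ⟨1, j⟩)‖ ^ 2 = 0 := by
    intro j
    have : T (b ⟨1, j⟩) = 0 := hbmem ⟨1, j⟩
    rw [this]; simp
  have e2 : ∀ j, ‖T (b ⟨2, j⟩)‖ ^ 2 ≤ sstar ^ 2 := by
    intro j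
    have hm : b ⟨2, j⟩ ∈ Kᗮ := hWK (hbmem ⟨2, j⟩)
    exact pow_le_pow_left₀ (norm_nonneg _) (hsle _ hm (hbnorm _)) 2
  have s0 : ∑ j : Fin (finrank ℂ (V 0)), ‖T (b ⟨0, j⟩)‖ ^ 2 = (finrank ℂ K : ℝ) := by
    simp only [e0, Finset.sum_const, Finset.card_univ, Fintype.card_fin, nsmul_eq_mul, mul_one]
    congr 1
  have s1 : ∑ j : Fin (finrank ℂ (V 1)), ‖T (b ⟨1, j⟩)‖ ^ 2 = 0 := by
    simp [e1]
  have s2 : ∑ j : Fin (finrank ℂ (V 2)), ‖T (b ⟨2, j⟩)‖ ^ 2 ≤ (finrank ℂ W : ℝ) * sstar ^ 2 := by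
    have : finrank ℂ (V 2) = finrank ℂ W := by rw [hV]; rfl
    calc ∑ j : Fin (finrank ℂ (V 2)), ‖T (b ⟨2, j⟩)‖ ^ 2
        ≤ ∑ _j : Fin (finrank ℂ (V 2)), sstar ^ 2 := Finset.sum_le_sum fun j _ => e2 j
      _ = (finrank ℂ W : ℝ) * sstar ^ 2 := by
          rw [Finset.sum_const, Finset.card_univ, Fintype.card_fin, nsmul_eq_mul, this]
  -- dimension count
  have hdim : (finrank ℂ W : ℝ) = (finrank ℂ H : ℝ) - (finrank ℂ K : ℝ) - (finrank ℂ N : ℝ) := by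
    have h1 : finrank ℂ N + finrank ℂ W = finrank ℂ Kᗮ := by
      rw [hW]; exact Submodule.finrank_add_inf_finrank_orthogonal hNK
    have h2 : finrank ℂ K + finrank ℂ Kᗮ = finrank ℂ H := Submodule.finrank_add_finrank_orthogonal K
    have := congrArg (Nat.cast : ℕ → ℝ) h1
    have := congrArg (Nat.cast : ℕ → ℝ) h2
    push_cast at *
    linarith
  rw [s0, s1]
  rw [hdim] at s2
  linarith
end

section
/- For i = 1,…,k let Tᵢ be a finite product of orthogonal projections onto subspaces of H whose intersection equals a common subspace Y ⊆ H for every i, and define sᵢ = sup{‖Tᵢ v‖ : v ∈ Yᗮ, ‖v‖ = 1}. Let d = dim H and m₁ = dim Y. Then for every index i₀ ∈ {1,…,k}, the product M = T_k ∘ ⋯ ∘ T₁ satisfies tr(M† M) ≤ m₁ + (d − m₁ − dim ker T_{i₀}) · ∏_{i=1}^{k} sᵢ². -/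
open scoped ComplexOrder

section aux
variable {H : Type*} [NormedAddCommGroup H] [InnerProductSpace ℂ H] [FiniteDimensional ℂ H]

lemma proj_apply_mem {K : Submodule ℂ H} {v : H} (hv : v ∈ K) : proj K v = v := by
  exact Submodule.starProjection_eq_self_iff.mpr hv

lemma proj_mem_orthogonal {Y K : Submodule ℂ H} (hYK : Y ≤ K) {v : H} (hv : v ∈ Yᗮ) :
    proj K v ∈ Yᗮ := by
  intro y hy
  have h1 : (inner ℂ y (proj K v) : ℂ) = inner ℂ (proj K y : H) v := by
    exact (Submodule.inner_starProjection_left_eq_right K y v).symm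
  rw [h1, proj_apply_mem (hYK hy)]
  exact hv y hy

lemma proj_norm_le {K : Submodule ℂ H} (v : H) : ‖proj K v‖ ≤ ‖v‖ := by
  have h : ‖proj K v‖ = ‖Submodule.orthogonalProjection K v‖ := by simp [proj]
  rw [h]
  calc ‖Submodule.orthogonalProjection K v‖ ≤ ‖Submodule.orthogonalProjection K‖ * ‖v‖ :=
        (Submodule.orthogonalProjection K).le_opNorm v
    _ ≤ 1 * ‖v‖ := mul_le_mul_of_nonneg_right (Submodule.orthogonalProjection_norm_le K) (norm_nonneg v)
    _ = ‖v‖ := one_mul _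

lemma list_prod_fix_s7 (l : List (H →L[ℂ] H)) (v : H) (h : ∀ A ∈ l, A v = v) :
    l.prod v = v := by
  induction l with
  | nil => simp
  | cons a t ih =>
    rw [List.prod_cons, ContinuousLinearMap.mul_apply]
    rw [ih (fun A hA => h A (List.mem_cons_of_mem a hA))]
    exact h a (List.mem_cons_self)

lemma list_prod_norm_le (l : List (H →L[ℂ] H)) (v : H)
    (h : ∀ A ∈ l, ∀ w : H, ‖A w‖ ≤ ‖w‖) : ‖l.prod v‖ ≤ ‖v‖ := by
  induction l with
  | nil => simp
  | cons a t ih =>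
    rw [List.prod_cons, ContinuousLinearMap.mul_apply]
    calc ‖a (t.prod v)‖ ≤ ‖t.prod v‖ := h a (List.mem_cons_self) _
      _ ≤ ‖v‖ := ih (fun A hA w => h A (List.mem_cons_of_mem a hA) w)

lemma list_prod_rank (l : List (H →L[ℂ] H)) (A : H →L[ℂ] H) (hA : A ∈ l) :
    Module.finrank ℂ (LinearMap.range (l.prod : H →ₗ[ℂ] H)) ≤
      Module.finrank ℂ (LinearMap.range (A : H →ₗ[ℂ] H)) := by
  induction l with
  | nil => simp at hA
  | cons a t ih =>
    rw [List.prod_cons]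
    rcases List.mem_cons.mp hA with h | h
    · subst h
      have hle : LinearMap.range ((A * t.prod : H →L[ℂ] H) : H →ₗ[ℂ] H) ≤
          LinearMap.range (A : H →ₗ[ℂ] H) := by
        rintro x ⟨y, rfl⟩
        exact ⟨t.prod y, rfl⟩
      exact Submodule.finrank_mono hle
    · calc Module.finrank ℂ (LinearMap.range ((a * t.prod : H →L[ℂ] H) : H →ₗ[ℂ] H))
          ≤ Module.finrank ℂ (LinearMap.range (t.prod : H →ₗ[ℂ] H)) := by
            have heq : LinearMap.range ((a * t.prod : H →L[ℂ] H) : H →ₗ[ℂ] H) =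
                Submodule.map (a : H →ₗ[ℂ] H) (LinearMap.range (t.prod : H →ₗ[ℂ] H)) := by
              ext x
              simp [LinearMap.mem_range, Submodule.mem_map]
            rw [heq]
            exact Submodule.finrank_map_le _ _
        _ ≤ _ := ih h

lemma prod_bound (Y : Submodule ℂ H) : ∀ (k : ℕ) (T : Fin k → (H →L[ℂ] H)) (c : Fin k → ℝ),
    (∀ i, 0 ≤ c i) →
    (∀ i, ∀ v ∈ Yᗮ, T i v ∈ Yᗮ ∧ ‖T i v‖ ≤ c i * ‖v‖) →
    ∀ v ∈ Yᗮ, (List.ofFn T).reverse.prod v ∈ Yᗮ ∧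
      ‖(List.ofFn T).reverse.prod v‖ ≤ (∏ i, c i) * ‖v‖ := by
  intro k
  induction k with
  | zero => intro T c _ _ v hv; simpa using hv
  | succ n ih =>
    intro T c hc hTc v hv
    have hsplit : (List.ofFn T).reverse.prod =
        (List.ofFn (fun i : Fin n => T i.succ)).reverse.prod * T 0 := by
      rw [List.ofFn_succ, List.reverse_cons, List.prod_append, List.prod_singleton]
    obtain ⟨h0mem, h0norm⟩ := hTc 0 v hv
    obtain ⟨hmem, hnorm⟩ := ih (fun i => T i.succ) (fun i => c i.succ)
      (fun i : Fin n => hc i.succ) (fun i : Fin n => hTc i.succ) (T 0 v) h0mem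
    rw [hsplit, ContinuousLinearMap.mul_apply]
    refine ⟨hmem, ?_⟩
    calc ‖(List.ofFn fun i : Fin n => T i.succ).reverse.prod (T 0 v)‖
        ≤ (∏ i : Fin n, c i.succ) * ‖T 0 v‖ := hnorm
      _ ≤ (∏ i : Fin n, c i.succ) * (c 0 * ‖v‖) :=
          mul_le_mul_of_nonneg_left h0norm (Finset.prod_nonneg fun i _ => hc i.succ)
      _ = (∏ i, c i) * ‖v‖ := by rw [Fin.prod_univ_succ]; ring

lemma trace_eq_sum_norm {ι : Type*} [Fintype ι] [DecidableEq ι]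
    (b : OrthonormalBasis ι ℂ H) (M : H →L[ℂ] H) :
    LinearMap.trace ℂ H ((ContinuousLinearMap.adjoint M ∘L M : H →L[ℂ] H) : H →ₗ[ℂ] H) =
      ∑ i, ((‖M (b i)‖ : ℂ) ^ 2) := by
  rw [LinearMap.trace_eq_matrix_trace ℂ b.toBasis, Matrix.trace]
  congr 1
  ext i
  rw [Matrix.diag_apply, LinearMap.toMatrix_apply]
  rw [OrthonormalBasis.coe_toBasis_repr_apply, OrthonormalBasis.repr_apply_apply,
    OrthonormalBasis.coe_toBasis]
  have : ((ContinuousLinearMap.adjoint M ∘L M : H →L[ℂ] H) : H →ₗ[ℂ] H) (b i) =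
      ContinuousLinearMap.adjoint M (M (b i)) := rfl
  rw [this, ContinuousLinearMap.adjoint_inner_right]
  exact inner_self_eq_norm_sq_to_K _

end aux

lemma list_prod_mem_orth {H : Type*} [NormedAddCommGroup H] [InnerProductSpace ℂ H]
    (l : List (H →L[ℂ] H)) (S : Submodule ℂ H) (v : H) (hv : v ∈ S)
    (h : ∀ A ∈ l, ∀ w ∈ S, A w ∈ S) : l.prod v ∈ S := by
  induction l with
  | nil => simpa using hv
  | cons a t ih =>
    rw [List.prod_cons, ContinuousLinearMap.mul_apply]
    exact h a (List.mem_cons_self) _ (ih (fun A hA w hw => h A (List.mem_cons_of_mem a hA) w hw))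


/-- Let each `Tᵢ` (`i = 1, …, k`) be a finite product of orthogonal
projections onto subspaces whose intersection is a common subspace `Y`, with
`sᵢ = sup {‖Tᵢ v‖ : v ∈ Yᗮ, ‖v‖ = 1}`, and let `d = dim H`, `m₁ = dim Y`.  Then for every
index `i₀`, the product `M = T_k ∘ ⋯ ∘ T₁` satisfies
`tr(M† M) ≤ m₁ + (d − m₁ − dim ker T_{i₀}) ∏ᵢ sᵢ²` (in the complex order, the right-hand
side being a real number). -/
theorem statement7 {H : Type*} [NormedAddCommGroup H] [InnerProductSpace ℂ H]
    [FiniteDimensional ℂ H]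
    (k : ℕ) (Y : Submodule ℂ H) (T : Fin k → (H →L[ℂ] H))
    (hT : ∀ i, ∃ (n : ℕ) (X : Fin n → Submodule ℂ H),
      (⨅ j, X j) = Y ∧ T i = (List.ofFn fun j => proj (X j)).reverse.prod)
    (s : Fin k → ℝ)
    (hs : ∀ i, s i = sSup {r : ℝ | ∃ v ∈ Yᗮ, ‖v‖ = 1 ∧ r = ‖T i v‖})
    (i₀ : Fin k)
    (M : H →L[ℂ] H) (hM : M = (List.ofFn fun i => T i).reverse.prod) :
    LinearMap.trace ℂ H ((ContinuousLinearMap.adjoint M ∘L M : H →L[ℂ] H) : H →ₗ[ℂ] H) ≤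
      (((Module.finrank ℂ ↥Y : ℝ) +
        ((Module.finrank ℂ H : ℝ) - (Module.finrank ℂ ↥Y : ℝ) -
          (Module.finrank ℂ ↥(LinearMap.ker (T i₀ : H →ₗ[ℂ] H)) : ℝ)) *
            ∏ i, s i ^ 2 : ℝ) : ℂ) := by
  classical
  -- T i fixes Y pointwise
  have hfixT : ∀ i, ∀ v ∈ Y, T i v = v := by
    intro i v hv
    obtain ⟨n, X, hX, hTi⟩ := hT i
    rw [hTi]
    refine list_prod_fix_s7 _ _ ?_
    intro A hA
    rw [List.mem_reverse, List.mem_ofFn] at hA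
    obtain ⟨j, rfl⟩ := hA
    exact proj_apply_mem (by rw [← hX] at hv; exact iInf_le X j hv)
  -- T i preserves Yᗮ
  have horthT : ∀ i, ∀ v ∈ Yᗮ, T i v ∈ Yᗮ := by
    intro i v hv
    obtain ⟨n, X, hX, hTi⟩ := hT i
    rw [hTi]
    refine list_prod_mem_orth _ _ _ hv ?_
    intro A hA w hw
    rw [List.mem_reverse, List.mem_ofFn] at hA
    obtain ⟨j, rfl⟩ := hA
    exact proj_mem_orthogonal (hX ▸ iInf_le X j) hw
  -- T i is a contraction
  have hTnorm : ∀ i (v : H), ‖T i v‖ ≤ ‖v‖ := by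
    intro i v
    obtain ⟨n, X, hX, hTi⟩ := hT i
    rw [hTi]
    refine list_prod_norm_le _ _ ?_
    intro A hA w
    rw [List.mem_reverse, List.mem_ofFn] at hA
    obtain ⟨j, rfl⟩ := hA
    exact proj_norm_le w
  -- s i is nonnegative
  have hs0 : ∀ i, 0 ≤ s i := by
    intro i
    rw [hs i]
    by_cases hne : {r : ℝ | ∃ v ∈ Yᗮ, ‖v‖ = 1 ∧ r = ‖T i v‖}.Nonempty
    · obtain ⟨r, v, hv, hv1, hr⟩ := hne
      have hbdd : BddAbove {r : ℝ | ∃ v ∈ Yᗮ, ‖v‖ = 1 ∧ r = ‖T i v‖} := by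
        refine ⟨1, ?_⟩
        rintro x ⟨w, hw, hw1, rfl⟩
        calc ‖T i w‖ ≤ ‖w‖ := hTnorm i w
          _ = 1 := hw1
      have := le_csSup hbdd (show r ∈ _ from ⟨v, hv, hv1, hr⟩)
      have hr0 : 0 ≤ r := hr ▸ norm_nonneg _
      linarith
    · rw [Set.not_nonempty_iff_eq_empty] at hne
      rw [hne, Real.sSup_empty]
  -- norm bound on Yᗮ
  have hsb : ∀ i, ∀ v ∈ Yᗮ, ‖T i v‖ ≤ s i * ‖v‖ := by
    intro i v hv
    rcases eq_or_ne v 0 with rfl | hv0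
    · simp
    · set u : H := ((‖v‖ : ℂ))⁻¹ • v with hu
      have hvC : ‖((‖v‖ : ℝ) : ℂ)‖ = ‖v‖ := by
        simp
      have hun : ‖u‖ = 1 := by
        rw [hu, norm_smul, norm_inv, hvC, inv_mul_cancel₀ (norm_ne_zero_iff.mpr hv0)]
      have humem : u ∈ Yᗮ := Submodule.smul_mem _ _ hv
      have hbdd : BddAbove {r : ℝ | ∃ v ∈ Yᗮ, ‖v‖ = 1 ∧ r = ‖T i v‖} := by
        refine ⟨1, ?_⟩
        rintro x ⟨w, hw, hw1, rfl⟩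
        calc ‖T i w‖ ≤ ‖w‖ := hTnorm i w
          _ = 1 := hw1
      have hle : ‖T i u‖ ≤ s i := by
        rw [hs i]
        exact le_csSup hbdd ⟨u, humem, hun, rfl⟩
      have hvC0 : ((‖v‖ : ℝ) : ℂ) ≠ 0 := by
        simpa using norm_ne_zero_iff.mpr hv0
      have hexp : T i v = ((‖v‖ : ℝ) : ℂ) • T i u := by
        rw [hu, map_smul, smul_smul, mul_inv_cancel₀ hvC0, one_smul]
      rw [hexp, norm_smul, hvC, mul_comm]
      exact mul_le_mul_of_nonneg_right hle (norm_nonneg v)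
  -- M fixes Y
  have hMfix : ∀ v ∈ Y, M v = v := by
    intro v hv
    rw [hM]
    refine list_prod_fix_s7 _ _ ?_
    intro A hA
    rw [List.mem_reverse, List.mem_ofFn] at hA
    obtain ⟨i, rfl⟩ := hA
    exact hfixT i v hv
  -- M on Yᗮ
  have hMorth : ∀ v ∈ Yᗮ, M v ∈ Yᗮ ∧ ‖M v‖ ≤ (∏ i, s i) * ‖v‖ := by
    intro v hv
    rw [hM]
    exact prod_bound Y k T s hs0 (fun i w hw => ⟨horthT i w hw, hsb i w hw⟩) v hv
  -- kernel of M is inside Yᗮ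
  have hKorth : LinearMap.ker (M : H →ₗ[ℂ] H) ≤ Yᗮ := by
    intro v hv
    have hMv : M v = 0 := hv
    have hw : v - (Submodule.orthogonalProjection Y v : H) ∈ Yᗮ :=
      Submodule.sub_starProjection_mem_orthogonal v
    have hy : M (Submodule.orthogonalProjection Y v : H) = (Submodule.orthogonalProjection Y v : H) :=
      hMfix _ (Submodule.orthogonalProjection Y v).2
    have hMw : M (v - (Submodule.orthogonalProjection Y v : H)) ∈ Yᗮ := (hMorth _ hw).1
    have heq : (Submodule.orthogonalProjection Y v : H) = -(M (v - (Submodule.orthogonalProjection Y v : H))) := by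
      have h1 : M ((Submodule.orthogonalProjection Y v : H) + (v - (Submodule.orthogonalProjection Y v : H))) = 0 := by
        rw [add_sub_cancel]; exact hMv
      rw [map_add, hy] at h1
      exact eq_neg_of_add_eq_zero_left h1
    have hyY : (Submodule.orthogonalProjection Y v : H) ∈ Y := (Submodule.orthogonalProjection Y v).2
    have hyO : (Submodule.orthogonalProjection Y v : H) ∈ Yᗮ := heq ▸ Submodule.neg_mem _ hMw
    have hy0 : (Submodule.orthogonalProjection Y v : H) = 0 := by
      have := hyO _ hyY
      rwa [inner_self_eq_zero] at this
    have : v = v - (Submodule.orthogonalProjection Y v : H) := by rw [hy0, sub_zero]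
    rw [this]; exact hw
  -- rank inequality: ker T i₀ smaller than ker M
  have hrank : Module.finrank ℂ (LinearMap.ker ((T i₀) : H →ₗ[ℂ] H)) ≤
      Module.finrank ℂ (LinearMap.ker (M : H →ₗ[ℂ] H)) := by
    have hmem : T i₀ ∈ (List.ofFn fun i => T i).reverse := by
      rw [List.mem_reverse, List.mem_ofFn]; exact ⟨i₀, rfl⟩
    have h1 := list_prod_rank ((List.ofFn fun i => T i).reverse) (T i₀) hmem
    rw [← hM] at h1
    have h2 := LinearMap.finrank_range_add_finrank_ker (M : H →ₗ[ℂ] H)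
    have h3 := LinearMap.finrank_range_add_finrank_ker ((T i₀) : H →ₗ[ℂ] H)
    omega
  -- decomposition
  set Kk := LinearMap.ker (M : H →ₗ[ℂ] H) with hKdef
  set W := Kkᗮ ⊓ Yᗮ with hWdef
  set V : Fin 3 → Submodule ℂ H := ![Y, Kk, W] with hVdef
  have hV0 : V 0 = Y := rfl
  have hV1 : V 1 = Kk := rfl
  have hV2 : V 2 = W := rfl
  have hWY : W ≤ Yᗮ := inf_le_right
  have hWK : W ≤ Kkᗮ := inf_le_left
  have key1 : ∀ a ∈ Y, ∀ x ∈ Kk, (inner ℂ a x : ℂ) = 0 := fun a ha x hx => (hKorth hx) a ha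
  have key2 : ∀ a ∈ Y, ∀ x ∈ W, (inner ℂ a x : ℂ) = 0 := fun a ha x hx => (hWY hx) a ha
  have key3 : ∀ a ∈ Kk, ∀ x ∈ W, (inner ℂ a x : ℂ) = 0 := fun a ha x hx => (hWK hx) a ha
  have hfam : OrthogonalFamily ℂ (fun i => V i) (fun i => (V i).subtypeₗᵢ) := by
    intro i j hij v w
    fin_cases i <;> fin_cases j <;>
      first
        | exact absurd rfl hij
        | exact key1 _ v.2 _ w.2
        | exact key2 _ v.2 _ w.2
        | exact key3 _ v.2 _ w.2
        | exact inner_eq_zero_symm.mpr (key1 _ w.2 _ v.2)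
        | exact inner_eq_zero_symm.mpr (key2 _ w.2 _ v.2)
        | exact inner_eq_zero_symm.mpr (key3 _ w.2 _ v.2)
  have hsupKW : Kk ⊔ W = Yᗮ := Submodule.sup_orthogonal_inf_of_hasOrthogonalProjection hKorth
  have htop : (⨆ i, V i) = ⊤ := by
    apply top_unique
    have h1 : Y ⊔ (Kk ⊔ W) = ⊤ := by
      rw [hsupKW]; exact Submodule.sup_orthogonal_of_hasOrthogonalProjection
    rw [← h1]
    exact sup_le (le_iSup V 0) (sup_le (le_iSup V 1) (le_iSup V 2))
  have hinternal : DirectSum.IsInternal V :=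
    hfam.isInternal_iff.mpr (by rw [htop]; exact Submodule.top_orthogonal_eq_bot)
  let b := hinternal.collectedOrthonormalBasis hfam (fun i => stdOrthonormalBasis ℂ (V i))
  have hbmem : ∀ p : Σ i : Fin 3, Fin (Module.finrank ℂ (V i)), b p ∈ V p.1 :=
    fun p => hinternal.collectedOrthonormalBasis_mem hfam _ p
  have hbnorm : ∀ p, ‖b p‖ = 1 := fun p => b.orthonormal.1 p
  -- compute the trace
  rw [trace_eq_sum_norm b M]
  have hcast : (∑ p, ((‖M (b p)‖ : ℂ)) ^ 2) = ((∑ p, ‖M (b p)‖ ^ 2 : ℝ) : ℂ) := by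
    push_cast; ring
  rw [hcast, Complex.real_le_real]
  -- the three blocks
  set P : ℝ := ∏ i, s i ^ 2 with hP
  have hP0 : 0 ≤ P := Finset.prod_nonneg fun i _ => sq_nonneg _
  have hb0 : ∀ j : Fin (Module.finrank ℂ (V 0)), ‖M (b ⟨0, j⟩)‖ ^ 2 = 1 := by
    intro j
    rw [hMfix _ (hbmem ⟨0, j⟩), hbnorm]; norm_num
  have hb1 : ∀ j : Fin (Module.finrank ℂ (V 1)), ‖M (b ⟨1, j⟩)‖ ^ 2 = 0 := by
    intro j
    have : M (b ⟨1, j⟩) = 0 := hbmem ⟨1, j⟩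
    rw [this]; simp
  have hb2 : ∀ j : Fin (Module.finrank ℂ (V 2)), ‖M (b ⟨2, j⟩)‖ ^ 2 ≤ P := by
    intro j
    have hmem : b ⟨2, j⟩ ∈ Yᗮ := hWY (hbmem ⟨2, j⟩)
    have h1 : ‖M (b ⟨2, j⟩)‖ ≤ ∏ i, s i := by
      have := (hMorth _ hmem).2
      rwa [hbnorm, mul_one] at this
    have h2 : ‖M (b ⟨2, j⟩)‖ ^ 2 ≤ (∏ i, s i) ^ 2 :=
      pow_le_pow_left₀ (norm_nonneg _) h1 2
    calc ‖M (b ⟨2, j⟩)‖ ^ 2 ≤ (∏ i, s i) ^ 2 := h2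
      _ = P := by rw [hP, Finset.prod_pow]
  -- sum splitting
  rw [← Finset.univ_sigma_univ, Finset.sum_sigma]
  rw [Fin.sum_univ_three]
  have hsum0 : (∑ j : Fin (Module.finrank ℂ (V 0)), ‖M (b ⟨0, j⟩)‖ ^ 2)
      = (Module.finrank ℂ Y : ℝ) := by
    rw [Finset.sum_congr rfl (fun j _ => hb0 j), Finset.sum_const, Finset.card_univ,
      Fintype.card_fin, nsmul_eq_mul, mul_one, hV0]
  have hsum1 : (∑ j : Fin (Module.finrank ℂ (V 1)), ‖M (b ⟨1, j⟩)‖ ^ 2) = 0 := by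
    rw [Finset.sum_congr rfl (fun j _ => hb1 j), Finset.sum_const, smul_zero]
  have hsum2 : (∑ j : Fin (Module.finrank ℂ (V 2)), ‖M (b ⟨2, j⟩)‖ ^ 2)
      ≤ (Module.finrank ℂ W : ℝ) * P := by
    calc (∑ j : Fin (Module.finrank ℂ (V 2)), ‖M (b ⟨2, j⟩)‖ ^ 2)
        ≤ ∑ _j : Fin (Module.finrank ℂ (V 2)), P := Finset.sum_le_sum fun j _ => hb2 j
      _ = (Module.finrank ℂ W : ℝ) * P := by
        rw [Finset.sum_const, Finset.card_univ, Fintype.card_fin, nsmul_eq_mul, hV2]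
  -- dimension counting
  have hd1 : Module.finrank ℂ Y + Module.finrank ℂ Yᗮ = Module.finrank ℂ H :=
    Submodule.finrank_add_finrank_orthogonal Y
  have hKW0 : Kk ⊓ W = ⊥ := by
    rw [eq_bot_iff]
    rintro x ⟨hx1, hx2⟩
    have hxx := (hWK hx2) x hx1
    rw [inner_self_eq_zero] at hxx
    simp [hxx]
  have hd2 : Module.finrank ℂ Kk + Module.finrank ℂ W = Module.finrank ℂ Yᗮ := by
    have h := Submodule.finrank_sup_add_finrank_inf_eq Kk W
    rw [hsupKW, hKW0] at h
    simpa using h.symm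
  have hWle : (Module.finrank ℂ W : ℝ) ≤ (Module.finrank ℂ H : ℝ) -
      (Module.finrank ℂ Y : ℝ) -
      (Module.finrank ℂ (LinearMap.ker ((T i₀) : H →ₗ[ℂ] H)) : ℝ) := by
    have c1 : ((Module.finrank ℂ Y + Module.finrank ℂ Yᗮ : ℕ) : ℝ)
        = (Module.finrank ℂ H : ℝ) := by exact_mod_cast congrArg (fun n : ℕ => (n : ℝ)) hd1
    have c2 : ((Module.finrank ℂ Kk + Module.finrank ℂ W : ℕ) : ℝ)
        = (Module.finrank ℂ Yᗮ : ℝ) := by exact_mod_cast congrArg (fun n : ℕ => (n : ℝ)) hd2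
    have c3 : (Module.finrank ℂ (LinearMap.ker ((T i₀) : H →ₗ[ℂ] H)) : ℝ)
        ≤ (Module.finrank ℂ Kk : ℝ) := by exact_mod_cast hrank
    push_cast at c1 c2
    linarith
  rw [hsum0, hsum1, add_zero]
  have hmul : (Module.finrank ℂ W : ℝ) * P ≤ ((Module.finrank ℂ H : ℝ) -
      (Module.finrank ℂ Y : ℝ) -
      (Module.finrank ℂ (LinearMap.ker ((T i₀) : H →ₗ[ℂ] H)) : ℝ)) * P :=
    mul_le_mul_of_nonneg_right hWle hP0
  linarith
end

section
/- Let X₁,…,Xₙ be subspaces of H with orthogonal projections P₁,…,Pₙ, and set T = Pₙ ∘ ⋯ ∘ P₂ ∘ P₁. Let d = dim H, m₁ = dim(⋂ᵢ Xᵢ), m₀ = dim(ker T), and s* = sup{‖T v‖ : v ∈ (⋂ᵢ Xᵢ)ᗮ, ‖v‖ = 1}. Then for every natural number k ≥ 1, tr((Tᵏ)† Tᵏ) ≤ m₁ + (d − m₁ − m₀) · s*^{2k}. -/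
open scoped ComplexOrder

/-- Let `T = Pₙ ∘ ⋯ ∘ P₁` be a product of orthogonal projections onto
subspaces `X₁, …, Xₙ` of `H`, `d = dim H`, `m₁ = dim ⋂ᵢ Xᵢ`, `m₀ = dim ker T`, and
`s⋆ = sup {‖T v‖ : v ∈ (⋂ᵢ Xᵢ)ᗮ, ‖v‖ = 1}`.  Then for every `k ≥ 1`,
`tr((Tᵏ)† Tᵏ) ≤ m₁ + (d − m₁ − m₀) s⋆^{2k}` (in the complex order, the right-hand side
being a real number). -/
theorem statement9 {H : Type*} [NormedAddCommGroup H] [InnerProductSpace ℂ H]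
    [FiniteDimensional ℂ H] (n : ℕ) (X : Fin n → Submodule ℂ H)
    (T : H →L[ℂ] H)
    (hT : T = (List.ofFn fun i => proj (X i)).reverse.prod)
    (sstar : ℝ)
    (hsstar : sstar = sSup {r : ℝ | ∃ v ∈ (⨅ i, X i)ᗮ, ‖v‖ = 1 ∧ r = ‖T v‖}) :
    ∀ k : ℕ, 1 ≤ k →
    LinearMap.trace ℂ H
        ((ContinuousLinearMap.adjoint (T ^ k) ∘L T ^ k : H →L[ℂ] H) : H →ₗ[ℂ] H) ≤
      (((Module.finrank ℂ ↥(⨅ i, X i) : ℝ) +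
        ((Module.finrank ℂ H : ℝ) - (Module.finrank ℂ ↥(⨅ i, X i) : ℝ) -
          (Module.finrank ℂ ↥(LinearMap.ker (T : H →ₗ[ℂ] H)) : ℝ)) *
            sstar ^ (2 * k) : ℝ) : ℂ) := by
  classical
  intro k hk
  set M : Submodule ℂ H := ⨅ i, X i with hM
  set N : Submodule ℂ H := LinearMap.ker (T : H →ₗ[ℂ] H) with hN
  -- every factor is self-adjoint and fixes M pointwise; hence T and its adjoint fix M
  have hlist : ∀ l : List (H →L[ℂ] H),
      (∀ A ∈ l, IsSelfAdjoint A ∧ ∀ v ∈ M, A v = v) →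
      (∀ v ∈ M, l.prod v = v) ∧
      (∀ v ∈ M, ContinuousLinearMap.adjoint l.prod v = v) := by
    intro l
    induction l with
    | nil =>
      intro _
      have h1 : ContinuousLinearMap.adjoint (1 : H →L[ℂ] H) = 1 := by
        rw [← ContinuousLinearMap.star_eq_adjoint, star_one]
      exact ⟨fun v _ => rfl, fun v _ => by rw [List.prod_nil, h1]; rfl⟩
    | cons a t ih =>
      intro h
      have ha := h a List.mem_cons_self
      obtain ⟨ih1, ih2⟩ := ih fun A hA => h A (List.mem_cons_of_mem _ hA)
      constructor
      · intro v hv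
        rw [List.prod_cons, ContinuousLinearMap.mul_apply, ih1 v hv, ha.2 v hv]
      · intro v hv
        have : (a * t.prod) = a ∘L t.prod := rfl
        rw [List.prod_cons, this, ContinuousLinearMap.adjoint_comp,
          ContinuousLinearMap.comp_apply, ha.1.adjoint_eq, ha.2 v hv, ih2 v hv]
  have hfactors : ∀ A ∈ (List.ofFn fun i => proj (X i)).reverse,
      IsSelfAdjoint A ∧ ∀ v ∈ M, A v = v := by
    intro A hA
    rw [List.mem_reverse, List.mem_ofFn] at hA
    obtain ⟨i, rfl⟩ := hA
    refine ⟨isSelfAdjoint_starProjection (X i), fun v hv => ?_⟩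
    have hvXi : v ∈ X i := (iInf_le X i) hv
    exact Submodule.starProjection_eq_self_iff.mpr hvXi
  obtain ⟨hfix, hadj⟩ := hlist _ hfactors
  rw [← hT] at hfix hadj
  -- T maps Mᗮ into Mᗮ, and ker T ⊆ Mᗮ
  have hinv : ∀ v ∈ Mᗮ, T v ∈ Mᗮ := by
    intro v hv
    rw [Submodule.mem_orthogonal] at hv ⊢
    intro u hu
    have h1 : inner (𝕜 := ℂ) u (T v) = inner (𝕜 := ℂ) (ContinuousLinearMap.adjoint T u) v :=
      (ContinuousLinearMap.adjoint_inner_left T v u).symm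
    rw [h1, hadj u hu]
    exact hv u hu
  have hNle : N ≤ Mᗮ := by
    intro v hv
    have hTv : T v = 0 := hv
    rw [Submodule.mem_orthogonal]
    intro u hu
    have h1 : inner (𝕜 := ℂ) (ContinuousLinearMap.adjoint T u) v = inner (𝕜 := ℂ) u (T v) :=
      ContinuousLinearMap.adjoint_inner_left T v u
    rw [hadj u hu] at h1
    rw [h1, hTv, inner_zero_right]
  -- bound on the sphere of Mᗮ
  have hbdd : BddAbove {r : ℝ | ∃ v ∈ Mᗮ, ‖v‖ = 1 ∧ r = ‖T v‖} := by
    refine ⟨‖T‖, ?_⟩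
    rintro r ⟨v, hv, hv1, rfl⟩
    calc ‖T v‖ ≤ ‖T‖ * ‖v‖ := T.le_opNorm v
      _ = ‖T‖ := by rw [hv1, mul_one]
  have hs : ∀ v ∈ Mᗮ, ‖v‖ = 1 → ‖T v‖ ≤ sstar := by
    intro v hv h1
    rw [hsstar]
    exact le_csSup hbdd ⟨v, hv, h1, rfl⟩
  have hsmul : ∀ v ∈ Mᗮ, ‖T v‖ ≤ sstar * ‖v‖ := by
    intro v hv
    rcases eq_or_ne v 0 with rfl | hne
    · simp
    · have hn : ‖v‖ ≠ 0 := norm_ne_zero_iff.mpr hne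
      set u : H := ((‖v‖⁻¹ : ℝ) : ℂ) • v with hu
      have hun : ‖u‖ = 1 := by
        rw [hu, norm_smul]
        simp [abs_of_nonneg (inv_nonneg.mpr (norm_nonneg v)), inv_mul_cancel₀ hn]
      have hum : u ∈ Mᗮ := Submodule.smul_mem _ _ hv
      have := hs u hum hun
      rw [hu, map_smul, norm_smul] at this
      have h2 : ‖((‖v‖⁻¹ : ℝ) : ℂ)‖ = ‖v‖⁻¹ := by
        simp [abs_of_nonneg (inv_nonneg.mpr (norm_nonneg v))]
      rw [h2] at this
      calc ‖T v‖ = ‖v‖ * (‖v‖⁻¹ * ‖T v‖) := by field_simp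
        _ ≤ ‖v‖ * sstar := by
            exact mul_le_mul_of_nonneg_left this (norm_nonneg v)
        _ = sstar * ‖v‖ := mul_comm _ _
  -- iterate bound on Mᗮ
  have hiter : ∀ v ∈ Mᗮ, ‖v‖ = 1 → ‖(T ^ k) v‖ ^ 2 ≤ sstar ^ (2 * k) := by
    intro v hv h1
    have hs0 : 0 ≤ sstar := le_trans (norm_nonneg (T v)) (hs v hv h1)
    have key : ∀ m : ℕ, (T ^ m) v ∈ Mᗮ ∧ ‖(T ^ m) v‖ ≤ sstar ^ m := by
      intro m
      induction m with
      | zero => simpa using ⟨hv, le_of_eq h1⟩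
      | succ m ihm =>
        have happ : (T ^ (m + 1)) v = T ((T ^ m) v) := by
          rw [pow_succ']; rfl
        refine ⟨by rw [happ]; exact hinv _ ihm.1, ?_⟩
        rw [happ]
        calc ‖T ((T ^ m) v)‖ ≤ sstar * ‖(T ^ m) v‖ := hsmul _ ihm.1
          _ ≤ sstar * sstar ^ m := mul_le_mul_of_nonneg_left ihm.2 hs0
          _ = sstar ^ (m + 1) := (pow_succ' sstar m).symm
    calc ‖(T ^ k) v‖ ^ 2 ≤ (sstar ^ k) ^ 2 :=
          pow_le_pow_left₀ (norm_nonneg _) (key k).2 2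
      _ = sstar ^ (2 * k) := by rw [← pow_mul, mul_comm]
  -- orthogonal decomposition H = M ⊕ N ⊕ (Nᗮ ⊓ Mᗮ)
  set W : Submodule ℂ H := Nᗮ ⊓ Mᗮ with hW
  set V : Fin 3 → Submodule ℂ H := ![M, N, W] with hV
  have hV0 : V 0 = M := rfl
  have hV1 : V 1 = N := rfl
  have hV2 : V 2 = W := rfl
  have hpair : ∀ i j : Fin 3, i < j → V j ≤ (V i)ᗮ := by
    intro i j hij
    fin_cases i <;> fin_cases j <;>
      first
      | exact absurd hij (by decide)
      | exact hNle
      | exact inf_le_right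
      | exact inf_le_left
  have hortho : OrthogonalFamily ℂ (fun i => V i) (fun i => (V i).subtypeₗᵢ) := by
    intro i j hij v w
    rcases lt_or_gt_of_ne hij with h | h
    · exact Submodule.inner_right_of_mem_orthogonal v.2 (hpair i j h w.2)
    · exact Submodule.inner_left_of_mem_orthogonal w.2 (hpair j i h v.2)
  have hinternal : DirectSum.IsInternal fun i => V i := by
    rw [DirectSum.isInternal_submodule_iff_iSupIndep_and_iSup_eq_top]
    refine ⟨hortho.independent, ?_⟩
    rw [eq_top_iff, ← Submodule.sup_orthogonal_of_hasOrthogonalProjection (K := M)]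
    have h1 : N ⊔ W = Mᗮ := by
      rw [hW]; exact Submodule.sup_orthogonal_inf_of_hasOrthogonalProjection hNle
    refine sup_le (le_iSup V 0) ?_
    rw [← h1]
    exact sup_le (le_iSup V 1) (le_iSup V 2)
  set b := hinternal.collectedOrthonormalBasis hortho
    (fun i => stdOrthonormalBasis ℂ (V i)) with hb
  have hbmem : ∀ a : Σ i : Fin 3, Fin (Module.finrank ℂ (V i)), b a ∈ V a.1 :=
    fun a => hinternal.collectedOrthonormalBasis_mem hortho _ a
  have hbnorm : ∀ a, ‖b a‖ = 1 := fun a => b.orthonormal.1 a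
  -- trace formula
  set A : H →L[ℂ] H := ContinuousLinearMap.adjoint (T ^ k) ∘L T ^ k with hA
  have htr : LinearMap.trace ℂ H (A : H →ₗ[ℂ] H)
      = ∑ a, ((‖(T ^ k) (b a)‖ : ℂ) ^ 2) := by
    rw [LinearMap.trace_eq_matrix_trace ℂ b.toBasis, Matrix.trace]
    congr 1
    ext a
    rw [Matrix.diag_apply, LinearMap.toMatrix_apply, b.coe_toBasis,
      b.coe_toBasis_repr_apply, b.repr_apply_apply]
    calc inner (𝕜 := ℂ) (b a) ((A : H →ₗ[ℂ] H) (b a))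
        = inner (𝕜 := ℂ) (b a) (ContinuousLinearMap.adjoint (T ^ k) ((T ^ k) (b a))) := rfl
      _ = inner (𝕜 := ℂ) ((T ^ k) (b a)) ((T ^ k) (b a)) :=
          ContinuousLinearMap.adjoint_inner_right _ _ _
      _ = (‖(T ^ k) (b a)‖ : ℂ) ^ 2 := inner_self_eq_norm_sq_to_K _
  rw [htr]
  have hsum : (∑ a, ((‖(T ^ k) (b a)‖ : ℂ) ^ 2))
      = ((∑ a, ‖(T ^ k) (b a)‖ ^ 2 : ℝ) : ℂ) := by push_cast; ring_nf
  rw [hsum]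
  rw [Complex.real_le_real]
  -- now a purely real estimate
  have hfixk : ∀ v ∈ M, (T ^ k) v = v := by
    have : ∀ m : ℕ, ∀ v ∈ M, (T ^ m) v = v := by
      intro m
      induction m with
      | zero => intro v _; simp
      | succ m ihm =>
        intro v hv
        have h2 : (T ^ (m + 1)) v = T ((T ^ m) v) := by rw [pow_succ']; rfl
        rw [h2, ihm v hv, hfix v hv]
    exact this k
  obtain ⟨k', rfl⟩ : ∃ k', k = k' + 1 := ⟨k - 1, (Nat.succ_pred_eq_of_pos hk).symm⟩
  have hkerk : ∀ v ∈ N, (T ^ (k' + 1)) v = 0 := by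
    intro v hv
    have hTv : T v = 0 := hv
    have : (T ^ (k' + 1)) v = (T ^ k') (T v) := by rw [pow_succ]; rfl
    rw [this, hTv, map_zero]
  rw [← Finset.univ_sigma_univ, Finset.sum_sigma]
  rw [Fin.sum_univ_three]
  have e0 : ∀ j, ‖(T ^ (k' + 1)) (b ⟨0, j⟩)‖ ^ 2 = 1 := by
    intro j
    have hmem : b ⟨0, j⟩ ∈ M := hV0 ▸ hbmem ⟨0, j⟩
    rw [hfixk _ hmem, hbnorm ⟨0, j⟩, one_pow]
  have e1 : ∀ j, ‖(T ^ (k' + 1)) (b ⟨1, j⟩)‖ ^ 2 = 0 := by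
    intro j
    have hmem : b ⟨1, j⟩ ∈ N := hV1 ▸ hbmem ⟨1, j⟩
    rw [hkerk _ hmem, norm_zero]; ring
  have e2 : ∀ j, ‖(T ^ (k' + 1)) (b ⟨2, j⟩)‖ ^ 2 ≤ sstar ^ (2 * (k' + 1)) := by
    intro j
    have hmem : b ⟨2, j⟩ ∈ W := hV2 ▸ hbmem ⟨2, j⟩
    exact hiter _ hmem.2 (hbnorm ⟨2, j⟩)
  have s0 : (∑ j : Fin (Module.finrank ℂ (V 0)), ‖(T ^ (k' + 1)) (b ⟨0, j⟩)‖ ^ 2)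
      = (Module.finrank ℂ M : ℝ) := by
    simp only [e0, Finset.sum_const, Finset.card_univ, Fintype.card_fin, nsmul_eq_mul, mul_one]
    rw [hV0]
  have s1 : (∑ j : Fin (Module.finrank ℂ (V 1)), ‖(T ^ (k' + 1)) (b ⟨1, j⟩)‖ ^ 2) = 0 := by
    simp only [e1, Finset.sum_const_zero]
  have s2 : (∑ j : Fin (Module.finrank ℂ (V 2)), ‖(T ^ (k' + 1)) (b ⟨2, j⟩)‖ ^ 2)
      ≤ (Module.finrank ℂ W : ℝ) * sstar ^ (2 * (k' + 1)) := by
    calc (∑ j : Fin (Module.finrank ℂ (V 2)), ‖(T ^ (k' + 1)) (b ⟨2, j⟩)‖ ^ 2)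
        ≤ ∑ _j : Fin (Module.finrank ℂ (V 2)), sstar ^ (2 * (k' + 1)) :=
          Finset.sum_le_sum fun j _ => e2 j
      _ = (Module.finrank ℂ (V 2) : ℝ) * sstar ^ (2 * (k' + 1)) := by
          simp [Finset.sum_const, nsmul_eq_mul]
      _ = (Module.finrank ℂ W : ℝ) * sstar ^ (2 * (k' + 1)) := by rw [hV2]
  -- dimension bookkeeping
  have hd1 : Module.finrank ℂ M + Module.finrank ℂ Mᗮ = Module.finrank ℂ H :=
    Submodule.finrank_add_finrank_orthogonal M
  have hd2 : Module.finrank ℂ N + Module.finrank ℂ W = Module.finrank ℂ Mᗮ := by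
    rw [hW]; exact Submodule.finrank_add_inf_finrank_orthogonal hNle
  have hWd : (Module.finrank ℂ W : ℝ)
      = (Module.finrank ℂ H : ℝ) - Module.finrank ℂ M - Module.finrank ℂ N := by
    have := congrArg (Nat.cast (R := ℝ)) hd1
    have := congrArg (Nat.cast (R := ℝ)) hd2
    push_cast at *
    linarith
  rw [hWd] at s2
  linarith [s0, s1, s2]
end

section
/- Fix integers t ≥ 1 and q ≥ 1. For a permutation π of {0,…,t−1}, let c(π) denote the number of orbits of π on {0,…,t−1} (fixed points counting as orbits of size one). Then the real matrix M indexed by pairs of permutations σ, τ of {0,…,t−1}, with entries M(σ,τ) = q^{c(σ τ⁻¹)}, is positive semidefinite. -/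
/-- The number of orbits of a permutation `π` of `Fin t`, i.e. the number of orbits of the
action on `Fin t` of the cyclic subgroup generated by `π` (fixed points count as orbits of
size one). -/
noncomputable def orbitCount {t : ℕ} (π : Equiv.Perm (Fin t)) : ℕ :=
  Nat.card (MulAction.orbitRel.Quotient (Subgroup.zpowers π) (Fin t))

lemma orbitCount_inv {t : ℕ} (π : Equiv.Perm (Fin t)) : orbitCount π⁻¹ = orbitCount π := by
  unfold orbitCount
  rw [Subgroup.zpowers_inv]

lemma card_invariant (t q : ℕ) (π : Equiv.Perm (Fin t)) :
    Nat.card {f : Fin t → Fin q // ∀ x, f (π x) = f x} = q ^ orbitCount π := by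
  have e : {f : Fin t → Fin q // ∀ x, f (π x) = f x} ≃
      (MulAction.orbitRel.Quotient (Subgroup.zpowers π) (Fin t) → Fin q) := by
    refine ⟨fun f => Quotient.lift f.1 ?_, fun g => ⟨fun x => g (Quotient.mk _ x), ?_⟩, ?_, ?_⟩
    · -- constant on orbits
      intro a b hab
      obtain ⟨f, hf⟩ := f
      have hn : ∀ (n : ℕ) (x : Fin t), f ((π ^ n) x) = f x := by
        intro n
        induction n with
        | zero => intro x; simp
        | succ n ih =>
          intro x
          rw [pow_succ, Equiv.Perm.mul_apply, ih, hf]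
      have hz : ∀ (k : ℤ) (x : Fin t), f ((π ^ k) x) = f x := by
        intro k x
        rcases k with n | n
        · simpa using hn n x
        · rw [zpow_negSucc]
          have := hn (n + 1) ((π ^ (n + 1))⁻¹ x)
          rw [← Equiv.Perm.mul_apply, mul_inv_cancel, Equiv.Perm.one_apply] at this; exact this.symm
      obtain ⟨⟨g, k, rfl⟩, hg⟩ := hab
      simp only [Subgroup.mk_smul] at hg
      rw [← hg]
      exact hz k b
    · intro x
      refine congrArg g (Quotient.sound ?_)
      exact ⟨⟨π, Subgroup.mem_zpowers π⟩, rfl⟩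
    · intro f
      ext x
      rfl
    · intro g
      funext x
      induction x using Quotient.inductionOn
      rfl
  rw [Nat.card_congr e, Nat.card_fun, Nat.card_eq_fintype_card (α := Fin q), Fintype.card_fin,
    orbitCount]

noncomputable def W (t q : ℕ) (p : (Fin t → Fin q) × (Fin t → Fin q)) (σ : Equiv.Perm (Fin t)) : ℝ :=
  if p.1 ∘ σ = p.2 then 1 else 0

lemma key (t q : ℕ) (σ τ : Equiv.Perm (Fin t)) :
    ((q : ℝ) ^ orbitCount (σ * τ⁻¹)) =
      ∑ p : (Fin t → Fin q) × (Fin t → Fin q), W t q p σ * W t q p τ := by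
  classical
  rw [Fintype.sum_prod_type]
  unfold W
  have h1 : ∀ f : Fin t → Fin q,
      (∑ g : Fin t → Fin q, (if f ∘ σ = g then (1:ℝ) else 0) * (if f ∘ τ = g then 1 else 0)) =
      (if f ∘ τ = f ∘ σ then (1:ℝ) else 0) := by
    intro f
    rw [Finset.sum_eq_single (f ∘ σ)]
    · simp
    · intro g _ hg
      rw [if_neg (Ne.symm hg), zero_mul]
    · simp
  simp only [h1]
  rw [Finset.sum_boole]
  have h2 : (Finset.univ.filter fun f : Fin t → Fin q => f ∘ τ = f ∘ σ).card =
      Nat.card {f : Fin t → Fin q // ∀ x, f ((σ * τ⁻¹) x) = f x} := by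
    rw [Nat.card_eq_fintype_card, Fintype.card_subtype]
    congr 1
    ext f
    simp only [Finset.mem_filter, Finset.mem_univ, true_and]
    constructor
    · intro h x
      have := congrFun h (τ⁻¹ x)
      simpa [Equiv.Perm.mul_apply] using this.symm
    · intro h
      funext y
      have := h (τ y)
      simpa [Equiv.Perm.mul_apply] using this.symm
  rw [h2, card_invariant]
  push_cast
  ring

/-- For integers `t ≥ 1` and `q ≥ 1`, the matrix indexed by
permutations `σ, τ` of `{0, …, t−1}` with entries `q ^ c(σ τ⁻¹)`, where `c(π)` is the
number of orbits of `π`, is positive semidefinite. -/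
theorem statement10 (t q : ℕ) (ht : 1 ≤ t) (hq : 1 ≤ q) :
    Matrix.PosSemidef
      (Matrix.of fun σ τ : Equiv.Perm (Fin t) => ((q : ℝ) ^ orbitCount (σ * τ⁻¹))) := by
  rw [Matrix.posSemidef_iff_dotProduct_mulVec]
  constructor
  · ext σ τ
    simp only [Matrix.conjTranspose_apply, Matrix.of_apply, star_trivial]
    have : τ * σ⁻¹ = (σ * τ⁻¹)⁻¹ := by group
    rw [this, orbitCount_inv]
  · intro x
    have expand : dotProduct (star x)
        ((Matrix.of fun σ τ : Equiv.Perm (Fin t) => ((q : ℝ) ^ orbitCount (σ * τ⁻¹))).mulVec x) =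
        ∑ p : (Fin t → Fin q) × (Fin t → Fin q), (∑ σ, W t q p σ * x σ) ^ 2 := by
      simp only [dotProduct, Matrix.mulVec, Matrix.of_apply, star_trivial,
        dotProduct, key, Finset.sum_mul, Finset.mul_sum, sq]
      conv_lhs => enter [2, σ]; rw [Finset.sum_comm]
      rw [Finset.sum_comm]
      refine Finset.sum_congr rfl fun p _ => ?_
      rw [Finset.sum_comm]
      refine Finset.sum_congr rfl fun τ _ => ?_
      refine Finset.sum_congr rfl fun σ _ => ?_
      ring
    rw [expand]
    exact Finset.sum_nonneg fun p _ => sq_nonneg _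
end

section
/- Let c be a real number with 0 < c < 1. Then the function f(x) = −log(1 − c^x) is convex on the open interval (0, ∞). -/
open Real Set

private lemma comp_aux {s t : Set ℝ} {g f : ℝ → ℝ} (hg : ConvexOn ℝ t g)
    (hf : ConvexOn ℝ s f) (hmaps : ∀ x ∈ s, f x ∈ t) (hg' : MonotoneOn g t) :
    ConvexOn ℝ s (fun x => g (f x)) :=
  ⟨hf.1, fun x hx y hy a b ha hb hab =>
    (hg' (hmaps _ (hf.1 hx hy ha hb hab)) (hg.1 (hmaps x hx) (hmaps y hy) ha hb hab)
      (hf.2 hx hy ha hb hab)).trans (hg.2 (hmaps x hx) (hmaps y hy) ha hb hab)⟩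

private lemma convex_neg_log_one_sub : ConvexOn ℝ (Ioo (0:ℝ) 1) (fun t => -Real.log (1 - t)) := by
  have h := (strictConcaveOn_log_Ioi.concaveOn.comp_affineMap
    (AffineMap.lineMap (1:ℝ) (0:ℝ))).neg
  have heq : (fun t : ℝ => -Real.log (1 - t)) =
      -(Real.log ∘ (AffineMap.lineMap (1:ℝ) (0:ℝ))) := by
    funext t
    simp [AffineMap.lineMap_apply]
    ring_nf
  rw [heq]
  refine h.subset ?_ (convex_Ioo 0 1)
  intro t ht
  simp only [mem_preimage, AffineMap.lineMap_apply, mem_Ioi, vsub_eq_sub, vadd_eq_add,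
    smul_eq_mul]
  nlinarith [ht.1, ht.2]

/-- For `0 < c < 1`, the function `x ↦ −log(1 − c^x)` is convex on
`(0, ∞)` (here `c ^ x` is the real power `Real.rpow`). -/
theorem statement11 (c : ℝ) (hc0 : 0 < c) (hc1 : c < 1) :
    ConvexOn ℝ (Set.Ioi (0 : ℝ)) (fun x : ℝ => -Real.log (1 - c ^ x)) := by
  have hexp : ConvexOn ℝ (Set.Ioi (0:ℝ)) (fun x : ℝ => c ^ x) := by
    have h := (convexOn_exp.comp_affineMap
      ((LinearMap.toAffineMap (LinearMap.smulRight (LinearMap.id : ℝ →ₗ[ℝ] ℝ) (Real.log c))))).subset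
      (subset_preimage_univ) (convex_Ioi 0)
    convert h using 1
    any_goals with_reducible_and_instances rfl
    funext x
    simp [Real.rpow_def_of_pos hc0, mul_comm]
  have hmaps : ∀ x ∈ Set.Ioi (0:ℝ), c ^ x ∈ Ioo (0:ℝ) 1 := fun x hx =>
    ⟨Real.rpow_pos_of_pos hc0 x, Real.rpow_lt_one hc0.le hc1 hx⟩
  have hmono : MonotoneOn (fun t => -Real.log (1 - t)) (Ioo (0:ℝ) 1) := by
    intro a ha b hb hab
    simp only
    have : Real.log (1 - b) ≤ Real.log (1 - a) :=
      Real.log_le_log (by linarith [hb.2]) (by linarith)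
    linarith
  exact comp_aux (g := fun t => -Real.log (1 - t)) (f := fun x => c ^ x) convex_neg_log_one_sub hexp hmaps hmono
end

section
/- Let c be a real number with 0 < c < 1, let k ≥ 1 be an integer, and let ℓ₁,…,ℓ_k be positive real numbers with mean ℓ̄ = (1/k) Σ_{i=1}^{k} ℓᵢ. Then −Σ_{i=1}^{k} log(1 − c^{ℓᵢ}) ≥ −k · log(1 − c^{ℓ̄}). -/
/-!
The map `x ↦ log (1 - c ^ x)` is concave on `(0, ∞)`: it is the concave, decreasing function
`y ↦ log (1 - y)` composed with the convex function `x ↦ c ^ x`. The inequality is Jensen's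
inequality for it with uniform weights.
-/

open Real Set

lemma ConcaveOn.sum_map_le_card_mul_map_average {ι E : Type*} [AddCommGroup E] [Module ℝ E]
    {s : Set E} {f : E → ℝ} (hf : ConcaveOn ℝ s f) (t : Finset ι) {p : ι → E}
    (hp : ∀ i ∈ t, p i ∈ s) :
    ∑ i ∈ t, f (p i) ≤ t.card * f ((t.card : ℝ)⁻¹ • ∑ i ∈ t, p i) := by
  rcases t.eq_empty_or_nonempty with rfl | ht
  · simp
  have hcard : (0 : ℝ) < t.card := by exact_mod_cast ht.card_pos
  have jensen := hf.le_map_sum (fun _ _ => inv_nonneg.2 hcard.le)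
    (by simp [hcard.ne']) hp
  rw [← Finset.smul_sum, ← Finset.smul_sum, smul_eq_mul, inv_mul_le_iff₀ hcard] at jensen
  exact jensen

lemma concaveOn_log_one_sub : ConcaveOn ℝ (Iio 1) (fun y : ℝ => log (1 - y)) := by
  refine ⟨convex_Iio 1, fun x hx y hy a b ha hb hab => ?_⟩
  calc a • log (1 - x) + b • log (1 - y)
      ≤ log (a • (1 - x) + b • (1 - y)) :=
        strictConcaveOn_log_Ioi.concaveOn.2 (mem_Ioi.2 (sub_pos.2 hx)) (mem_Ioi.2 (sub_pos.2 hy))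
          ha hb hab
    _ = log (1 - (a • x + b • y)) := by
        simp only [smul_eq_mul]
        congr 1
        linear_combination hab

lemma antitoneOn_log_one_sub : AntitoneOn (fun y : ℝ => log (1 - y)) (Iio 1) :=
  fun _ _ y hy hxy => log_le_log (sub_pos.2 hy) (by linarith)

lemma concaveOn_log_one_sub_rpow {c : ℝ} (hc0 : 0 < c) (hc1 : c < 1) :
    ConcaveOn ℝ (Ioi 0) (fun x : ℝ => log (1 - c ^ x)) := by
  have hlt {x : ℝ} (hx : x ∈ Ioi 0) : c ^ x < 1 := rpow_lt_one hc0.le hc1 hx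
  refine ⟨convex_Ioi 0, fun x hx y hy a b ha hb hab => ?_⟩
  have hmix : a * c ^ x + b * c ^ y < 1 := by
    simpa [hab] using convex_Iio (1 : ℝ) (hlt hx) (hlt hy) ha hb hab
  calc a • log (1 - c ^ x) + b • log (1 - c ^ y)
      ≤ log (1 - (a * c ^ x + b * c ^ y)) :=
        concaveOn_log_one_sub.2 (hlt hx) (hlt hy) ha hb hab
    _ ≤ log (1 - c ^ (a • x + b • y)) :=
        antitoneOn_log_one_sub (hlt (convex_Ioi 0 hx hy ha hb hab)) hmix
          ((convexOn_rpow_left hc0).2 (mem_univ x) (mem_univ y) ha hb hab)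

theorem statement12_general (c : ℝ) (hc0 : 0 < c) (hc1 : c < 1)
    (k : ℕ) (ℓ : Fin k → ℝ) (hℓ : ∀ i, 0 < ℓ i)
    (ℓbar : ℝ) (hℓbar : ℓbar = (∑ i, ℓ i) / k) :
    -∑ i, Real.log (1 - c ^ ℓ i) ≥ -(k : ℝ) * Real.log (1 - c ^ ℓbar) := by
  have jensen := (concaveOn_log_one_sub_rpow hc0 hc1).sum_map_le_card_mul_map_average Finset.univ
    (fun i _ => hℓ i)
  rw [Finset.card_univ, Fintype.card_fin, smul_eq_mul, inv_mul_eq_div, ← hℓbar] at jensen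
  linarith

/-- For `0 < c < 1`, an integer `k ≥ 1` and positive reals
`ℓ₁, …, ℓ_k` with mean `ℓ̄ = (1/k) ∑ᵢ ℓᵢ`, one has
`−∑ᵢ log(1 − c^{ℓᵢ}) ≥ −k · log(1 − c^{ℓ̄})` (with real powers `Real.rpow`). -/
theorem statement12 (c : ℝ) (hc0 : 0 < c) (hc1 : c < 1)
    (k : ℕ) (hk : 1 ≤ k) (ℓ : Fin k → ℝ) (hℓ : ∀ i, 0 < ℓ i)
    (ℓbar : ℝ) (hℓbar : ℓbar = (∑ i, ℓ i) / k) :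
    -∑ i, Real.log (1 - c ^ ℓ i) ≥ -(k : ℝ) * Real.log (1 - c ^ ℓbar) :=
  statement12_general c hc0 hc1 k ℓ hℓ ℓbar hℓbar
end

section
/- Let q ≥ 2 be a real number and let m ≥ 3 be an integer, and set a = q^{−2^m}. Then 2(1 + a)·(2/(q² + 1))^{2^{m−1}} − 8a ≥ 0, and (1 − a)^{−2} · √( 2(1 + a)·(2/(q² + 1))^{2^{m−1}} − 8a ) ≤ √2 · (16/15) · (2/q²)^{2^{m−2}}. -/
/-! Write `n = 2^{m-1} ≥ 4`, so that `a = (q²)^{-n} ≤ 4^{-4}`. Since `2q²/(q² + 1) ≥ 8/5` and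
`(8/5)^4 ≥ 4`, we get `4a ≤ (2/(q² + 1))^n`, which gives the nonnegativity. For the bound, drop
`-8a` under the root and use `(2/(q² + 1))^n ≤ (2/q²)^n = ((2/q²)^{2^{m-2}})²`; what is left is the
scalar inequality `(1 - a)^{-2} √(1 + a) ≤ 16/15`, valid for `0 ≤ a ≤ 1/256`. -/

section

variable {q : ℝ} {n : ℕ}

lemma inv_sq_pow_le_of_two_le (hq : 2 ≤ q) (hn : 4 ≤ n) : ((q ^ 2) ^ n)⁻¹ ≤ 1 / 256 := by
  have h256 : (256 : ℝ) ≤ (q ^ 2) ^ n :=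
    calc (256 : ℝ) = 4 ^ 4 := by norm_num
      _ ≤ 4 ^ n := pow_le_pow_right₀ (by norm_num) hn
      _ ≤ (q ^ 2) ^ n := pow_le_pow_left₀ (by norm_num) (by nlinarith) n
  rw [one_div]
  exact inv_anti₀ (by norm_num) h256

lemma four_mul_inv_sq_pow_le (hq : 2 ≤ q) (hn : 4 ≤ n) :
    4 * ((q ^ 2) ^ n)⁻¹ ≤ (2 / (q ^ 2 + 1)) ^ n := by
  have hratio : (8 / 5 : ℝ) ≤ 2 * q ^ 2 / (q ^ 2 + 1) := by
    rw [div_le_div_iff₀ (by norm_num) (by positivity)]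
    nlinarith
  have hfour : (4 : ℝ) ≤ (2 / (q ^ 2 + 1)) ^ n * (q ^ 2) ^ n :=
    calc (4 : ℝ) ≤ (8 / 5) ^ 4 := by norm_num
      _ ≤ (8 / 5) ^ n := pow_le_pow_right₀ (by norm_num) hn
      _ ≤ (2 * q ^ 2 / (q ^ 2 + 1)) ^ n := pow_le_pow_left₀ (by norm_num) hratio n
      _ = (2 / (q ^ 2 + 1)) ^ n * (q ^ 2) ^ n := by rw [← mul_pow, div_mul_eq_mul_div, mul_comm]
  rw [← div_eq_mul_inv, div_le_iff₀ (by positivity)]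
  exact hfour

lemma div_sq_add_one_pow_le_div_sq_pow (hq : 2 ≤ q) :
    (2 / (q ^ 2 + 1)) ^ n ≤ (2 / q ^ 2) ^ n := by
  have hq2 : 0 < q ^ 2 := by positivity
  gcongr
  linarith

end

lemma sqrt_two_mul_one_add_mul_sub_le {a x y : ℝ} (ha : 0 ≤ a) (hy : 0 ≤ y) (hxy : x ≤ y ^ 2) :
    √(2 * (1 + a) * x - 8 * a) ≤ √(2 * (1 + a)) * y := by
  rw [← Real.sqrt_sq hy, ← Real.sqrt_mul (by positivity)]
  gcongr
  nlinarith

lemma inv_one_sub_sq_mul_sqrt_le {a : ℝ} (ha₀ : 0 ≤ a) (ha : a ≤ 1 / 256) :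
    ((1 - a) ^ 2)⁻¹ * √(2 * (1 + a)) ≤ √2 * (16 / 15) := by
  rw [inv_mul_le_iff₀ (by nlinarith)]
  have hrhs : (1 - a) ^ 2 * (√2 * (16 / 15)) = √(2 * ((16 / 15) * (1 - a) ^ 2) ^ 2) := by
    rw [Real.sqrt_mul (by norm_num), Real.sqrt_sq (by positivity)]
    ring
  rw [hrhs]
  gcongr
  nlinarith [sq_nonneg (1 - a), sq_nonneg a, sq_nonneg (a * (1 - a))]

/-- For a real `q ≥ 2` and an integer `m ≥ 3`, with `a = q^{−2^m}`,
the quantity `2(1 + a)(2/(q² + 1))^{2^{m−1}} − 8a` is nonnegative and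
`(1 − a)⁻² √(2(1 + a)(2/(q² + 1))^{2^{m−1}} − 8a) ≤ √2 · (16/15) · (2/q²)^{2^{m−2}}`. -/
theorem statement15 (q : ℝ) (hq : 2 ≤ q) (m : ℕ) (hm : 3 ≤ m)
    (a : ℝ) (ha : a = (q ^ (2 ^ m : ℕ))⁻¹) :
    0 ≤ 2 * (1 + a) * (2 / (q ^ 2 + 1)) ^ (2 ^ (m - 1) : ℕ) - 8 * a ∧
    ((1 - a) ^ 2)⁻¹ *
        Real.sqrt (2 * (1 + a) * (2 / (q ^ 2 + 1)) ^ (2 ^ (m - 1) : ℕ) - 8 * a) ≤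
      Real.sqrt 2 * (16 / 15) * (2 / q ^ 2) ^ (2 ^ (m - 2) : ℕ) := by
  have hn : 2 ^ 2 ≤ 2 ^ (m - 1) := Nat.pow_le_pow_right two_pos (by omega)
  have ha' : a = ((q ^ 2) ^ 2 ^ (m - 1))⁻¹ := by
    rw [ha, ← pow_mul, ← pow_succ', Nat.sub_add_cancel (by omega)]
  have ha₀ : 0 ≤ a := by rw [ha']; positivity
  have ha_le : a ≤ 1 / 256 := ha' ▸ inv_sq_pow_le_of_two_le hq hn
  have h4a : 4 * a ≤ (2 / (q ^ 2 + 1)) ^ 2 ^ (m - 1) := ha' ▸ four_mul_inv_sq_pow_le hq hn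
  refine ⟨by nlinarith [pow_pos (show 0 < 2 / (q ^ 2 + 1) by positivity) (2 ^ (m - 1))], ?_⟩
  have hxy : (2 / (q ^ 2 + 1)) ^ 2 ^ (m - 1) ≤ ((2 / q ^ 2) ^ 2 ^ (m - 2)) ^ 2 := by
    rw [← pow_mul, ← pow_succ, show m - 2 + 1 = m - 1 by omega]
    exact div_sq_add_one_pow_le_div_sq_pow hq
  calc ((1 - a) ^ 2)⁻¹ * √(2 * (1 + a) * (2 / (q ^ 2 + 1)) ^ 2 ^ (m - 1) - 8 * a)
      ≤ ((1 - a) ^ 2)⁻¹ * (√(2 * (1 + a)) * (2 / q ^ 2) ^ 2 ^ (m - 2)) := by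
        gcongr
        exact sqrt_two_mul_one_add_mul_sub_le ha₀ (by positivity) hxy
    _ = ((1 - a) ^ 2)⁻¹ * √(2 * (1 + a)) * (2 / q ^ 2) ^ 2 ^ (m - 2) := (mul_assoc ..).symm
    _ ≤ √2 * (16 / 15) * (2 / q ^ 2) ^ 2 ^ (m - 2) :=
        mul_le_mul_of_nonneg_right (inv_one_sub_sq_mul_sqrt_le ha₀ ha_le) (by positivity)
end
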